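/- arXiv:math/0412530 — 4 statements merged into one kernel-verified Lean document; each statement's English description precedes it below -/
import Mathlib

section
/- Let G₁ and G₂ be tori, each admitting at least one Hamiltonian cycle, and suppose there exist positive integers s₁ and s₂ such that gcd(|G₁|, s₁) = 1, gcd(|G₂|, s₂) = 1, and s₁ + s₂ = gcd(|G₁|, |G₂|). If moreover s₁·mrl(G₂) = s₂·mrl(G₁), then mrl(G₁ × G₂) ≥ mrl(G₁) + mrl(G₂). -/
/-!
A torus is the Cartesian (box) product of cycle graphs `γ₁ × ⋯ × γ_k` where
`γ_i` is a cycle on `sz i ≥ 3` vertices.  We model its vertex set as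
`∀ i, ZMod (sz i)`, with two vertices adjacent when they differ in exactly one
coordinate, by `±1` around that cycle.  A Hamiltonian cycle is a cyclic
enumeration `f : ZMod N → V` (with `N` the number of vertices) which is
bijective and takes consecutive vertices to adjacent vertices.  The run length
of a Hamiltonian cycle is the largest `r ≥ 1` such that any `r` consecutive
edges contain at most one edge in any single dimension, and `mrl` is the
maximum run length over all Hamiltonian cycles.
-/

/-- Vertices of the torus with dimension sizes `sz`. -/
def TorusVtx (k : ℕ) (sz : Fin k → ℕ) : Type := ∀ i : Fin k, ZMod (sz i)

/-- The number of vertices of the torus with dimension sizes `sz`. -/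
def torusCard (k : ℕ) (sz : Fin k → ℕ) : ℕ := ∏ i : Fin k, sz i

/-- Adjacency in the torus: the two vertices differ in exactly one coordinate,
and there by one step around the corresponding cycle. -/
def TorusAdj {k : ℕ} {sz : Fin k → ℕ} (u v : TorusVtx k sz) : Prop :=
  ∃ i : Fin k, (v i = u i + 1 ∨ u i = v i + 1) ∧ ∀ j : Fin k, j ≠ i → u j = v j

/-- A Hamiltonian cycle of the torus, as a cyclic enumeration of all of its
vertices in which consecutive vertices are adjacent. -/
def IsHamCycle {k : ℕ} {sz : Fin k → ℕ}
    (f : ZMod (torusCard k sz) → TorusVtx k sz) : Prop :=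
  Function.Bijective f ∧ ∀ t, TorusAdj (f t) (f (t + 1))

/-- The edge of the cycle `f` at position `s` (joining `f s` to `f (s+1)`)
is in dimension `i`, i.e. its endpoints differ in coordinate `i`. -/
def EdgeInDim {k : ℕ} {sz : Fin k → ℕ}
    (f : ZMod (torusCard k sz) → TorusVtx k sz) (i : Fin k)
    (s : ZMod (torusCard k sz)) : Prop :=
  f s i ≠ f (s + 1) i

/-- Any `r` consecutive edges of the cycle `f` (read cyclically) contain at
most one edge in any single dimension. -/
def WindowOk {k : ℕ} {sz : Fin k → ℕ}
    (f : ZMod (torusCard k sz) → TorusVtx k sz) (r : ℕ) : Prop :=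
  ∀ (t : ZMod (torusCard k sz)) (i : Fin k) (a b : ℕ), a < r → b < r → a ≠ b →
    ¬(EdgeInDim f i (t + (a : ZMod (torusCard k sz))) ∧
      EdgeInDim f i (t + (b : ZMod (torusCard k sz))))

/-- The run length of a Hamiltonian cycle: the largest `r ≥ 1` such that any
`r` consecutive edges contain at most one edge in any single dimension. -/
noncomputable def runLength {k : ℕ} {sz : Fin k → ℕ}
    (f : ZMod (torusCard k sz) → TorusVtx k sz) : ℕ :=
  sSup {r : ℕ | 1 ≤ r ∧ WindowOk f r}

/-- The maximum run length of the torus: the maximum of `runLength` over all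
of its Hamiltonian cycles. -/
noncomputable def mrl (k : ℕ) (sz : Fin k → ℕ) : ℕ :=
  sSup {m : ℕ | ∃ f, IsHamCycle (k := k) (sz := sz) f ∧ m = runLength f}

private def dZ {a b : ℕ} (h : a = b) (x : ZMod a) : ZMod b := h ▸ x

private lemma dZ_inj {a b : ℕ} (h : a = b) {x y : ZMod a} (hxy : dZ h x = dZ h y) : x = y := by
  subst h; exact hxy

private lemma dZ_add_one {a b : ℕ} (h : a = b) (x : ZMod a) : dZ h (x + 1) = dZ h x + 1 := by
  subst h; rfl

private def combine {k₁ k₂ : ℕ} {sz₁ : Fin k₁ → ℕ} {sz₂ : Fin k₂ → ℕ}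
    (u : TorusVtx k₁ sz₁) (v : TorusVtx k₂ sz₂) : TorusVtx (k₁+k₂) (Fin.append sz₁ sz₂) :=
  fun i => Fin.addCases (motive := fun i => ZMod (Fin.append sz₁ sz₂ i))
    (fun j => dZ (Fin.append_left sz₁ sz₂ j).symm (u j))
    (fun j => dZ (Fin.append_right sz₁ sz₂ j).symm (v j)) i

private lemma combine_left {k₁ k₂ : ℕ} {sz₁ : Fin k₁ → ℕ} {sz₂ : Fin k₂ → ℕ}
    (u : TorusVtx k₁ sz₁) (v : TorusVtx k₂ sz₂) (j : Fin k₁) :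
    combine u v (Fin.castAdd k₂ j) = dZ (Fin.append_left sz₁ sz₂ j).symm (u j) := by
  simp [combine]

private lemma combine_right {k₁ k₂ : ℕ} {sz₁ : Fin k₁ → ℕ} {sz₂ : Fin k₂ → ℕ}
    (u : TorusVtx k₁ sz₁) (v : TorusVtx k₂ sz₂) (j : Fin k₂) :
    combine u v (Fin.natAdd k₁ j) = dZ (Fin.append_right sz₁ sz₂ j).symm (v j) := by
  simp [combine]

private lemma torusCard_pos {k : ℕ} {sz : Fin k → ℕ} (hsz : ∀ i, 3 ≤ sz i) :
    0 < torusCard k sz :=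
  Finset.prod_pos (fun i _ => by have := hsz i; omega)

private lemma torusCard_append {k₁ k₂ : ℕ} (sz₁ : Fin k₁ → ℕ) (sz₂ : Fin k₂ → ℕ) :
    torusCard (k₁ + k₂) (Fin.append sz₁ sz₂) = torusCard k₁ sz₁ * torusCard k₂ sz₂ := by
  unfold torusCard
  rw [Fin.prod_univ_add]
  congr 1
  · exact Finset.prod_congr rfl (fun j _ => Fin.append_left sz₁ sz₂ j)
  · exact Finset.prod_congr rfl (fun j _ => Fin.append_right sz₁ sz₂ j)
private def posA (g s₁ : ℕ) (n : ℕ) : ℕ := (n / g) * s₁ + min (n % g) s₁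
private def posB (g s₁ s₂ : ℕ) (n : ℕ) : ℕ := (n / g) * s₂ + (n % g - s₁)

private lemma succ_divmod {g : ℕ} (hg0 : 0 < g) (n : ℕ) :
    (n % g + 1 < g → (n+1) / g = n / g ∧ (n+1) % g = n % g + 1) ∧
    (n % g + 1 = g → (n+1) / g = n / g + 1 ∧ (n+1) % g = 0) := by
  have hdm := Nat.div_add_mod n g
  constructor
  · intro h
    exact (Nat.div_mod_unique hg0 (a := n+1) (c := n % g + 1) (d := n / g)).mpr ⟨by omega, h⟩
  · intro h
    have hmul : g * (n / g + 1) = g * (n / g) + g := by ring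
    exact (Nat.div_mod_unique hg0 (a := n+1) (c := 0) (d := n / g + 1)).mpr ⟨by omega, hg0⟩

section arith
variable {g s₁ s₂ : ℕ}

private lemma posA_stepA (hs₂ : 0 < s₂) (hg : s₁ + s₂ = g) {n : ℕ} (h : n % g < s₁) :
    posA g s₁ (n+1) = posA g s₁ n + 1 ∧ posB g s₁ s₂ (n+1) = posB g s₁ s₂ n := by
  have hg0 : 0 < g := by omega
  have h2 : n % g + 1 < g := by omega
  obtain ⟨hd, hm⟩ := (succ_divmod hg0 n).1 h2
  unfold posA posB
  rw [hd, hm]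
  omega

private lemma posA_stepB (hs₁ : 0 < s₁) (hg : s₁ + s₂ = g) {n : ℕ} (h : ¬ n % g < s₁) :
    posA g s₁ (n+1) = posA g s₁ n ∧ posB g s₁ s₂ (n+1) = posB g s₁ s₂ n + 1 := by
  have hg0 : 0 < g := by omega
  have hmlt : n % g < g := Nat.mod_lt _ hg0
  rcases Nat.lt_or_ge (n % g + 1) g with h2 | h2
  · obtain ⟨hd, hm⟩ := (succ_divmod hg0 n).1 h2
    unfold posA posB
    rw [hd, hm]
    omega
  · have h2' : n % g + 1 = g := by omega
    obtain ⟨hd, hm⟩ := (succ_divmod hg0 n).2 h2'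
    unfold posA posB
    rw [hd, hm]
    have : min (n % g) s₁ = s₁ := by omega
    rw [this]
    have : min 0 s₁ = 0 := by omega
    rw [this]
    -- posA: (q+1)s₁ + 0 = q s₁ + s₁ ; posB: (q+1)s₂ + 0 = q s₂ + (g-1-s₁) + 1
    constructor
    · ring
    · have hρ : n % g - s₁ = s₂ - 1 := by omega
      rw [hρ]
      have : (n / g + 1) * s₂ = n / g * s₂ + s₂ := by ring
      omega

private lemma posA_steps (hs₁ : 0 < s₁) (hs₂ : 0 < s₂) (hg : s₁ + s₂ = g) (n : ℕ) :
    (posA g s₁ n ≤ posA g s₁ (n+1) ∧ posA g s₁ (n+1) ≤ posA g s₁ n + 1) ∧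
    (posB g s₁ s₂ n ≤ posB g s₁ s₂ (n+1) ∧ posB g s₁ s₂ (n+1) ≤ posB g s₁ s₂ n + 1) := by
  rcases Nat.lt_or_ge (n % g) s₁ with h | h
  · obtain ⟨h1, h2⟩ := posA_stepA hs₂ hg h; omega
  · obtain ⟨h1, h2⟩ := posA_stepB hs₁ hg (n := n) (by omega); omega

private lemma posA_add_mul (hg0 : 0 < g) (n q : ℕ) :
    posA g s₁ (n + q * g) = posA g s₁ n + q * s₁ ∧
    posB g s₁ s₂ (n + q * g) = posB g s₁ s₂ n + q * s₂ := by
  unfold posA posB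
  rw [Nat.add_mul_div_right n q hg0, Nat.add_mul_mod_self_right]
  constructor <;> ring

-- generic window-position lemma
private lemma windows_arith (P : ℕ → ℕ) (L r : ℕ)
    (hmono : ∀ m, P m ≤ P (m+1) ∧ P (m+1) ≤ P m + 1)
    (hL : ∀ m, P (m + L) = P m + r)
    (n a b : ℕ) (ha : a < L) (hb : b < L) (hab : a < b)
    (hsa : P (n+a+1) = P (n+a) + 1) (hsb : P (n+b+1) = P (n+b) + 1) :
    P n + (P (n+a) - P n) = P (n+a) ∧ P n + (P (n+b) - P n) = P (n+b) ∧
    (P (n+a) - P n) < r ∧ (P (n+b) - P n) < r ∧ (P (n+a) - P n) ≠ (P (n+b) - P n) := by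
  have gmono : ∀ m c : ℕ, P m ≤ P (m + c) := by
    intro m c
    induction c with
    | zero => simp
    | succ c ih => calc P m ≤ P (m + c) := ih
                    _ ≤ P (m + c + 1) := (hmono (m+c)).1
    
  have h1 : P n ≤ P (n + a) := gmono n a
  have h2 : P n ≤ P (n + b) := gmono n b
  have h3 : P (n + a + 1) ≤ P (n + b) := by
    have := gmono (n + a + 1) (b - (a+1))
    have he : n + a + 1 + (b - (a+1)) = n + b := by omega
    rwa [he] at this
  have h4 : P (n + b + 1) ≤ P (n + L) := by
    have := gmono (n + b + 1) (L - (b+1))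
    have he : n + b + 1 + (L - (b+1)) = n + L := by omega
    rwa [he] at this
  rw [hL n] at h4
  omega

end arith

section comb
variable {k₁ k₂ : ℕ} {sz₁ : Fin k₁ → ℕ} {sz₂ : Fin k₂ → ℕ}

private lemma combine_adj_left {u u' : TorusVtx k₁ sz₁} {v : TorusVtx k₂ sz₂}
    (h : TorusAdj u u') : TorusAdj (combine u v) (combine u' v) := by
  obtain ⟨i, hi, hrest⟩ := h
  refine ⟨Fin.castAdd k₂ i, ?_, ?_⟩
  · rw [combine_left, combine_left]
    rcases hi with h1 | h1
    · left; rw [h1, dZ_add_one]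
    · right; rw [h1, dZ_add_one]
  · intro j hj
    induction j using Fin.addCases with
    | left j' =>
        rw [combine_left, combine_left]
        have hne : j' ≠ i := fun he => hj (by rw [he])
        rw [hrest j' hne]
    | right j' => rw [combine_right, combine_right]

private lemma combine_adj_right {u : TorusVtx k₁ sz₁} {v v' : TorusVtx k₂ sz₂}
    (h : TorusAdj v v') : TorusAdj (combine u v) (combine u v') := by
  obtain ⟨i, hi, hrest⟩ := h
  refine ⟨Fin.natAdd k₁ i, ?_, ?_⟩
  · rw [combine_right, combine_right]
    rcases hi with h1 | h1
    · left; rw [h1, dZ_add_one]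
    · right; rw [h1, dZ_add_one]
  · intro j hj
    induction j using Fin.addCases with
    | left j' => rw [combine_left, combine_left]
    | right j' =>
        rw [combine_right, combine_right]
        have hne : j' ≠ i := fun he => hj (by rw [he])
        rw [hrest j' hne]

private lemma combine_inj {u u' : TorusVtx k₁ sz₁} {v v' : TorusVtx k₂ sz₂}
    (h : combine u v = combine u' v') : u = u' ∧ v = v' := by
  constructor
  · funext j
    have := congrFun h (Fin.castAdd k₂ j)
    rw [combine_left, combine_left] at this
    exact dZ_inj _ this
  · funext j
    have := congrFun h (Fin.natAdd k₁ j)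
    rw [combine_right, combine_right] at this
    exact dZ_inj _ this

private lemma bij_of_inj {k : ℕ} {sz : Fin k → ℕ} (hsz : ∀ i, 3 ≤ sz i)
    (f : ZMod (torusCard k sz) → TorusVtx k sz) (hinj : Function.Injective f) :
    Function.Bijective f := by
  haveI : ∀ i, NeZero (sz i) := fun i => ⟨by have := hsz i; omega⟩
  haveI : NeZero (torusCard k sz) := ⟨(torusCard_pos hsz).ne'⟩
  haveI : Fintype (TorusVtx k sz) := inferInstanceAs (Fintype (∀ i, ZMod (sz i)))
  rw [Fintype.bijective_iff_injective_and_card]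
  refine ⟨hinj, ?_⟩
  have h1 : Fintype.card (ZMod (torusCard k sz)) = torusCard k sz := ZMod.card _
  have h2 : Fintype.card (TorusVtx k sz) = torusCard k sz := by
    have hp : Fintype.card (TorusVtx k sz) = Fintype.card (∀ i, ZMod (sz i)) :=
      Fintype.card_congr (Equiv.refl _)
    rw [hp, Fintype.card_pi]
    exact Finset.prod_congr rfl (fun i _ => ZMod.card _)
  rw [h1, h2]

end comb

private lemma posA_add_posB {g s₁ s₂ : ℕ} (hg : s₁ + s₂ = g) (hg0 : 0 < g) (n : ℕ) :
    posA g s₁ n + posB g s₁ s₂ n = n := by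
  have hdm := Nat.div_add_mod n g
  unfold posA posB
  have : n / g * s₁ + n / g * s₂ = g * (n / g) := by rw [← Nat.left_distrib, hg]; ring
  omega

private lemma inj_arith {N₁ N₂ g s₁ s₂ : ℕ} (hN₁ : 0 < N₁) (hN₂ : 0 < N₂)
    (hgdef : g = Nat.gcd N₁ N₂) (hsum : s₁ + s₂ = g) (hs₁ : 0 < s₁) (hs₂ : 0 < s₂)
    (hc₁ : Nat.Coprime N₁ s₁) (hc₂ : Nat.Coprime N₂ s₂)
    {n n' : ℕ} (hn : n < N₁ * N₂) (hn' : n' < N₁ * N₂)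
    (h₁ : posA g s₁ n ≡ posA g s₁ n' [MOD N₁])
    (h₂ : posB g s₁ s₂ n ≡ posB g s₁ s₂ n' [MOD N₂]) : n = n' := by
  have hg0 : 0 < g := by omega
  have hgd₁ : g ∣ N₁ := hgdef ▸ Nat.gcd_dvd_left _ _
  have hgd₂ : g ∣ N₂ := hgdef ▸ Nat.gcd_dvd_right _ _
  -- n ≡ n' mod g
  have hmodg : n ≡ n' [MOD g] := by
    have ha := (h₁.of_dvd hgd₁).add (h₂.of_dvd hgd₂)
    rwa [posA_add_posB hsum hg0, posA_add_posB hsum hg0] at ha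
  have hrg : n % g = n' % g := hmodg
  -- cancel to get quotients congruent
  have hq₁ : n / g ≡ n' / g [MOD N₁] := by
    have h₁' : n / g * s₁ + min (n' % g) s₁ ≡ n' / g * s₁ + min (n' % g) s₁ [MOD N₁] := by
      have h := h₁; unfold posA at h; rwa [hrg] at h
    have := Nat.ModEq.add_right_cancel' _ h₁'
    exact Nat.ModEq.cancel_right_of_coprime hc₁ this
  have hq₂ : n / g ≡ n' / g [MOD N₂] := by
    have h₂' : n / g * s₂ + (n' % g - s₁) ≡ n' / g * s₂ + (n' % g - s₁) [MOD N₂] := by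
      have h := h₂; unfold posB at h; rwa [hrg] at h
    have := Nat.ModEq.add_right_cancel' _ h₂'
    exact Nat.ModEq.cancel_right_of_coprime hc₂ this
  -- quotients are < N₁ * N₂ / g and congruent mod lcm = N₁ N₂ / g
  have hlcm : Nat.lcm N₁ N₂ * g = N₁ * N₂ := by
    rw [hgdef]; rw [Nat.mul_comm]; exact Nat.gcd_mul_lcm N₁ N₂
  have hqlt : ∀ m : ℕ, m < N₁ * N₂ → m / g < Nat.lcm N₁ N₂ := by
    intro m hm
    by_contra hcon
    push_neg at hcon
    have : Nat.lcm N₁ N₂ * g ≤ (m / g) * g := Nat.mul_le_mul_right _ hcon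
    have h2 : m / g * g ≤ m := Nat.div_mul_le_self m g
    omega
  have key : ∀ a b : ℕ, a ≤ b → a < Nat.lcm N₁ N₂ → b < Nat.lcm N₁ N₂ →
      a ≡ b [MOD N₁] → a ≡ b [MOD N₂] → a = b := by
    intro a b hab ha hb m1 m2
    have d1 : N₁ ∣ b - a := (Nat.modEq_iff_dvd' hab).mp m1
    have d2 : N₂ ∣ b - a := (Nat.modEq_iff_dvd' hab).mp m2
    have : Nat.lcm N₁ N₂ ∣ b - a := Nat.lcm_dvd d1 d2
    have := Nat.eq_zero_of_dvd_of_lt this (by omega)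
    omega
  have hq : n / g = n' / g := by
    rcases Nat.le_total (n / g) (n' / g) with h | h
    · exact key _ _ h (hqlt n hn) (hqlt n' hn') hq₁ hq₂
    · exact (key _ _ h (hqlt n' hn') (hqlt n hn) hq₁.symm hq₂.symm).symm
  have e1 := Nat.div_add_mod n g
  have e2 := Nat.div_add_mod n' g
  have : g * (n / g) = g * (n' / g) := by rw [hq]
  omega
-- an edge exists somewhere, and coordinates that differ by 1 really differ
private lemma adj_ne {k : ℕ} {sz : Fin k → ℕ} (hsz : ∀ i, 3 ≤ sz i)
    {u v : TorusVtx k sz} (h : TorusAdj u v) : ∃ i, u i ≠ v i := by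
  obtain ⟨i, hi, -⟩ := h
  refine ⟨i, ?_⟩
  haveI : Fact (1 < sz i) := ⟨by have := hsz i; omega⟩
  rcases hi with h1 | h1
  · intro he; rw [he] at h1; exact one_ne_zero (left_eq_add.mp h1)
  · intro he; rw [← he] at h1; exact one_ne_zero (left_eq_add.mp h1)

private lemma windowOk_bdd {k : ℕ} {sz : Fin k → ℕ} (hsz : ∀ i, 3 ≤ sz i)
    {f : ZMod (torusCard k sz) → TorusVtx k sz} (hf : IsHamCycle f)
    {r : ℕ} (hr : WindowOk f r) : r ≤ torusCard k sz := by
  by_contra h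
  push_neg at h
  obtain ⟨i, hi⟩ := adj_ne hsz (hf.2 0)
  have hN : 0 < torusCard k sz := torusCard_pos hsz
  have := hr 0 i 0 (torusCard k sz) (by omega) h (by omega)
  apply this
  constructor
  · simpa [EdgeInDim] using hi
  · have : ((torusCard k sz : ℕ) : ZMod (torusCard k sz)) = 0 := by
      simp [ZMod.natCast_self]
    rw [this]
    simpa [EdgeInDim] using hi

private lemma runLength_mem {k : ℕ} {sz : Fin k → ℕ} (hsz : ∀ i, 3 ≤ sz i)
    {f : ZMod (torusCard k sz) → TorusVtx k sz} (hf : IsHamCycle f) :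
    1 ≤ runLength f ∧ WindowOk f (runLength f) := by
  have h1 : (1 : ℕ) ∈ {r : ℕ | 1 ≤ r ∧ WindowOk f r} := by
    refine ⟨le_refl 1, fun t i a b ha hb hab => ?_⟩
    omega
  have hbdd : BddAbove {r : ℕ | 1 ≤ r ∧ WindowOk f r} :=
    ⟨torusCard k sz, fun r hr => windowOk_bdd hsz hf hr.2⟩
  exact Nat.sSup_mem ⟨1, h1⟩ hbdd

private lemma runLength_le_card {k : ℕ} {sz : Fin k → ℕ} (hsz : ∀ i, 3 ≤ sz i)
    {f : ZMod (torusCard k sz) → TorusVtx k sz} (hf : IsHamCycle f) :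
    runLength f ≤ torusCard k sz :=
  windowOk_bdd hsz hf (runLength_mem hsz hf).2

private lemma mrl_attained {k : ℕ} {sz : Fin k → ℕ} (hsz : ∀ i, 3 ≤ sz i)
    (hG : ∃ f, IsHamCycle (k := k) (sz := sz) f) :
    ∃ f, IsHamCycle (k := k) (sz := sz) f ∧ runLength f = mrl k sz ∧
      1 ≤ mrl k sz ∧ WindowOk f (mrl k sz) := by
  obtain ⟨f0, hf0⟩ := hG
  have hbdd : BddAbove {m : ℕ | ∃ f, IsHamCycle (k := k) (sz := sz) f ∧ m = runLength f} := by
    refine ⟨torusCard k sz, fun m hm => ?_⟩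
    obtain ⟨f, hf, rfl⟩ := hm
    exact runLength_le_card hsz hf
  have hmem : mrl k sz ∈ {m : ℕ | ∃ f, IsHamCycle (k := k) (sz := sz) f ∧ m = runLength f} :=
    Nat.sSup_mem ⟨runLength f0, f0, hf0, rfl⟩ hbdd
  obtain ⟨f, hf, hfeq⟩ := hmem
  have hrm := runLength_mem hsz hf
  refine ⟨f, hf, hfeq.symm, ?_, ?_⟩
  · rw [hfeq]; exact hrm.1
  · rw [hfeq]; exact hrm.2

private lemma le_mrl {k : ℕ} {sz : Fin k → ℕ} (hsz : ∀ i, 3 ≤ sz i)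
    {f : ZMod (torusCard k sz) → TorusVtx k sz} (hf : IsHamCycle f)
    {r : ℕ} (h1 : 1 ≤ r) (hw : WindowOk f r) : r ≤ mrl k sz := by
  have h1' : r ≤ runLength f := by
    apply le_csSup ⟨torusCard k sz, fun r' hr' => windowOk_bdd hsz hf hr'.2⟩
    exact ⟨h1, hw⟩
  refine le_trans h1' ?_
  apply le_csSup
  · refine ⟨torusCard k sz, fun m hm => ?_⟩
    obtain ⟨f', hf', rfl⟩ := hm
    exact runLength_le_card hsz hf'
  · exact ⟨f, hf, rfl⟩

private lemma main_aux {k₁ k₂ : ℕ} {sz₁ : Fin k₁ → ℕ} {sz₂ : Fin k₂ → ℕ}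
    (hsz₁ : ∀ i, 3 ≤ sz₁ i) (hsz₂ : ∀ i, 3 ≤ sz₂ i)
    {f₁ : ZMod (torusCard k₁ sz₁) → TorusVtx k₁ sz₁}
    {f₂ : ZMod (torusCard k₂ sz₂) → TorusVtx k₂ sz₂}
    (hf₁ : IsHamCycle f₁) (hf₂ : IsHamCycle f₂)
    (s₁ s₂ r₁ r₂ : ℕ) (hs₁ : 0 < s₁) (hs₂ : 0 < s₂)
    (hg₁ : Nat.gcd (torusCard k₁ sz₁) s₁ = 1)
    (hg₂ : Nat.gcd (torusCard k₂ sz₂) s₂ = 1)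
    (hsum : s₁ + s₂ = Nat.gcd (torusCard k₁ sz₁) (torusCard k₂ sz₂))
    (hr₁ : 1 ≤ r₁) (hr₂ : 1 ≤ r₂)
    (hw₁ : WindowOk f₁ r₁) (hw₂ : WindowOk f₂ r₂)
    (hratio : s₁ * r₂ = s₂ * r₁) :
    r₁ + r₂ ≤ mrl (k₁ + k₂) (Fin.append sz₁ sz₂) := by
  revert hw₁ hw₂
  revert hf₁ hf₂
  revert f₁ f₂
  set N₁ := torusCard k₁ sz₁ with hN₁def
  set N₂ := torusCard k₂ sz₂ with hN₂def
  set Np := torusCard (k₁ + k₂) (Fin.append sz₁ sz₂) with hNpdef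
  set g := Nat.gcd N₁ N₂ with hgdef
  intro f₁ f₂ hf₁ hf₂ hw₁ hw₂
  have hN₁ : 0 < N₁ := torusCard_pos hsz₁
  have hN₂ : 0 < N₂ := torusCard_pos hsz₂
  have hNp : Np = N₁ * N₂ := torusCard_append sz₁ sz₂
  have hNp0 : 0 < Np := by rw [hNp]; positivity
  have hg0 : 0 < g := by omega
  have hgd₁ : g ∣ N₁ := Nat.gcd_dvd_left _ _
  have hgd₂ : g ∣ N₂ := Nat.gcd_dvd_right _ _
  have hgN₁ : g ≤ N₁ := Nat.le_of_dvd hN₁ hgd₁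
  have hNp1 : 1 < Np := by
    have : 2 ≤ N₁ := by omega
    have : 2 ≤ N₂ := Nat.le_of_dvd hN₂ hgd₂ |>.trans' (by omega)
    nlinarith [hNp]
  have hcop1 : Nat.Coprime g s₁ := Nat.Coprime.coprime_dvd_left hgd₁ hg₁
  have hcop2 : Nat.Coprime g s₂ := Nat.Coprime.coprime_dvd_left hgd₂ hg₂
  set L := r₁ + r₂ with hLdef
  have hkey1 : s₁ * L = r₁ * g := by
    have : s₁ * L = s₁ * r₁ + s₂ * r₁ := by rw [hLdef]; rw [Nat.mul_add, hratio]
    rw [this, ← hsum]; ring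
  have hkey2 : s₂ * L = r₂ * g := by
    have : s₂ * L = s₁ * r₂ + s₂ * r₂ := by rw [hLdef, Nat.mul_add, ← hratio]
    rw [this, ← hsum]; ring
  have hgL : g ∣ L := hcop1.dvd_of_dvd_mul_right (by rw [Nat.mul_comm, hkey1]; exact ⟨r₁, by ring⟩)
  set q := L / g with hqdef
  have hqg : q * g = L := Nat.div_mul_cancel hgL
  have hq1 : q * s₁ = r₁ := by
    have h : (q * s₁) * g = r₁ * g := by rw [← hkey1, ← hqg]; ring
    exact Nat.eq_of_mul_eq_mul_right hg0 h
  have hq2 : q * s₂ = r₂ := by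
    have h : (q * s₂) * g = r₂ * g := by rw [← hkey2, ← hqg]; ring
    exact Nat.eq_of_mul_eq_mul_right hg0 h
  set M := N₁ * (N₂ / g) with hMdef
  have hMg : M * g = Np := by rw [hNp, hMdef, Nat.mul_assoc, Nat.div_mul_cancel hgd₂]
  have hM1 : N₁ ∣ M := ⟨N₂ / g, rfl⟩
  have hM2 : N₂ ∣ M := by
    have h1 : M * g = N₁ * N₂ := by rw [hMdef, Nat.mul_assoc, Nat.div_mul_cancel hgd₂]
    have h2 : (N₂ * (N₁ / g)) * g = N₂ * N₁ := by rw [Nat.mul_assoc, Nat.div_mul_cancel hgd₁]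
    exact ⟨N₁ / g, Nat.eq_of_mul_eq_mul_right hg0 (by rw [h1, h2, Nat.mul_comm])⟩
  haveI : NeZero Np := ⟨hNp0.ne'⟩
  haveI : NeZero N₁ := ⟨hN₁.ne'⟩
  haveI : NeZero N₂ := ⟨hN₂.ne'⟩
  haveI : Fact (1 < Np) := ⟨hNp1⟩
  -- reduction mod Np
  have hbase : ∀ m : ℕ, ((posA g s₁ m : ℕ) : ZMod N₁) = ((posA g s₁ (m % Np) : ℕ) : ZMod N₁) ∧
      ((posB g s₁ s₂ m : ℕ) : ZMod N₂) = ((posB g s₁ s₂ (m % Np) : ℕ) : ZMod N₂) ∧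
      m % g = (m % Np) % g := by
    intro m
    have hm : m = m % Np + (m / Np * M) * g := by
      have h1 : m / Np * M * g = m / Np * Np := by rw [Nat.mul_assoc, hMg]
      have h2 := Nat.mod_add_div m Np
      have h3 : Np * (m / Np) = m / Np * Np := by ring
      omega
    obtain ⟨e1, e2⟩ := posA_add_mul (g := g) (s₁ := s₁) (s₂ := s₂) hg0 (m % Np) (m / Np * M)
    refine ⟨?_, ?_, ?_⟩
    · conv_lhs => rw [hm]
      rw [e1, Nat.cast_add]
      have : ((m / Np * M * s₁ : ℕ) : ZMod N₁) = 0 := by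
        rw [ZMod.natCast_eq_zero_iff]
        exact Dvd.dvd.mul_right (Dvd.dvd.mul_left hM1 _) _
      rw [this, add_zero]
    · conv_lhs => rw [hm]
      rw [e2, Nat.cast_add]
      have : ((m / Np * M * s₂ : ℕ) : ZMod N₂) = 0 := by
        rw [ZMod.natCast_eq_zero_iff]
        exact Dvd.dvd.mul_right (Dvd.dvd.mul_left hM2 _) _
      rw [this, add_zero]
    · conv_lhs => rw [hm]
      rw [Nat.add_mul_mod_self_right]
  have hred : ∀ m m' : ℕ, m % Np = m' % Np →
      ((posA g s₁ m : ℕ) : ZMod N₁) = ((posA g s₁ m' : ℕ) : ZMod N₁) ∧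
      ((posB g s₁ s₂ m : ℕ) : ZMod N₂) = ((posB g s₁ s₂ m' : ℕ) : ZMod N₂) ∧
      m % g = m' % g := by
    intro m m' h
    obtain ⟨a1, a2, a3⟩ := hbase m
    obtain ⟨b1, b2, b3⟩ := hbase m'
    rw [h] at a1 a2 a3
    exact ⟨a1.trans b1.symm, a2.trans b2.symm, a3.trans b3.symm⟩
  -- the composed cycle
  set F : ZMod Np → TorusVtx (k₁ + k₂) (Fin.append sz₁ sz₂) :=
    fun t => combine (f₁ ((posA g s₁ t.val : ℕ) : ZMod N₁))
      (f₂ ((posB g s₁ s₂ t.val : ℕ) : ZMod N₂)) with hF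
  have hvalsucc : ∀ t : ZMod Np, (t + 1).val = (t.val + 1) % Np := by
    intro t
    rw [ZMod.val_add, ZMod.val_one]
  have hstep : ∀ t : ZMod Np,
      F (t + 1) = combine (f₁ ((posA g s₁ (t.val + 1) : ℕ) : ZMod N₁))
        (f₂ ((posB g s₁ s₂ (t.val + 1) : ℕ) : ZMod N₂)) := by
    intro t
    obtain ⟨c1, c2, -⟩ := hred ((t+1).val) (t.val + 1)
      (by rw [hvalsucc t, Nat.mod_mod_of_dvd _ (dvd_refl Np)])
    simp only [hF]
    rw [c1, c2]
  have hadj : ∀ t : ZMod Np, TorusAdj (F t) (F (t + 1)) := by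
    intro t
    rw [hstep t]
    simp only [hF]
    rcases Nat.lt_or_ge (t.val % g) s₁ with h | h
    · obtain ⟨e1, e2⟩ := posA_stepA (g := g) (s₁ := s₁) hs₂ hsum h
      rw [e1, e2, Nat.cast_add, Nat.cast_one]
      exact combine_adj_left (hf₁.2 _)
    · obtain ⟨e1, e2⟩ := posA_stepB (g := g) hs₁ hsum (n := t.val) (by omega)
      rw [e1, e2, Nat.cast_add, Nat.cast_one]
      exact combine_adj_right (hf₂.2 _)
  have hinj : Function.Injective F := by
    intro t t' h
    simp only [hF] at h
    obtain ⟨h1, h2⟩ := combine_inj h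
    have m1 := (ZMod.natCast_eq_natCast_iff _ _ _).mp (hf₁.1.injective h1)
    have m2 := (ZMod.natCast_eq_natCast_iff _ _ _).mp (hf₂.1.injective h2)
    have hlt : t.val < N₁ * N₂ := hNp ▸ ZMod.val_lt t
    have hlt' : t'.val < N₁ * N₂ := hNp ▸ ZMod.val_lt t'
    have := inj_arith hN₁ hN₂ hgdef hsum hs₁ hs₂ hg₁ hg₂ hlt hlt' m1 m2
    exact ZMod.val_injective Np this
  have hszP : ∀ i, 3 ≤ Fin.append sz₁ sz₂ i := by
    intro i
    induction i using Fin.addCases with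
    | left j => rw [Fin.append_left]; exact hsz₁ j
    | right j => rw [Fin.append_right]; exact hsz₂ j
  have hHam : IsHamCycle F := ⟨bij_of_inj hszP F hinj, hadj⟩
  have hedge1 : ∀ (s : ZMod Np) (i₁ : Fin k₁), EdgeInDim F (Fin.castAdd k₂ i₁) s →
      s.val % g < s₁ ∧ EdgeInDim f₁ i₁ ((posA g s₁ s.val : ℕ) : ZMod N₁) := by
    intro s i₁ he
    unfold EdgeInDim at he
    rw [hstep s] at he
    simp only [hF] at he
    rw [combine_left, combine_left] at he
    rcases Nat.lt_or_ge (s.val % g) s₁ with h | h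
    · refine ⟨h, ?_⟩
      obtain ⟨e1, -⟩ := posA_stepA (g := g) (s₁ := s₁) hs₂ hsum h
      rw [e1, Nat.cast_add, Nat.cast_one] at he
      show f₁ _ i₁ ≠ f₁ _ i₁
      intro hc
      exact he (by rw [hc])
    · exfalso
      obtain ⟨e1, -⟩ := posA_stepB (g := g) hs₁ hsum (n := s.val) (by omega)
      rw [e1] at he
      exact he rfl
  have hedge2 : ∀ (s : ZMod Np) (i₂ : Fin k₂), EdgeInDim F (Fin.natAdd k₁ i₂) s →
      ¬ (s.val % g < s₁) ∧ EdgeInDim f₂ i₂ ((posB g s₁ s₂ s.val : ℕ) : ZMod N₂) := by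
    intro s i₂ he
    unfold EdgeInDim at he
    rw [hstep s] at he
    simp only [hF] at he
    rw [combine_right, combine_right] at he
    rcases Nat.lt_or_ge (s.val % g) s₁ with h | h
    · exfalso
      obtain ⟨-, e2⟩ := posA_stepA (g := g) (s₁ := s₁) hs₂ hsum h
      rw [e2] at he
      exact he rfl
    · refine ⟨by omega, ?_⟩
      obtain ⟨-, e2⟩ := posA_stepB (g := g) hs₁ hsum (n := s.val) (by omega)
      rw [e2, Nat.cast_add, Nat.cast_one] at he
      show f₂ _ i₂ ≠ f₂ _ i₂
      intro hc
      exact he (by rw [hc])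
  have hmonoA : ∀ m, posA g s₁ m ≤ posA g s₁ (m+1) ∧ posA g s₁ (m+1) ≤ posA g s₁ m + 1 :=
    fun m => (posA_steps hs₁ hs₂ hsum m).1
  have hmonoB : ∀ m, posB g s₁ s₂ m ≤ posB g s₁ s₂ (m+1) ∧
      posB g s₁ s₂ (m+1) ≤ posB g s₁ s₂ m + 1 :=
    fun m => (posA_steps hs₁ hs₂ hsum m).2
  have hLA : ∀ m, posA g s₁ (m + L) = posA g s₁ m + r₁ := by
    intro m
    have h := (posA_add_mul (g := g) (s₁ := s₁) (s₂ := s₂) hg0 m q).1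
    rw [hqg] at h
    rw [h, hq1]
  have hLB : ∀ m, posB g s₁ s₂ (m + L) = posB g s₁ s₂ m + r₂ := by
    intro m
    have h := (posA_add_mul (g := g) (s₁ := s₁) (s₂ := s₂) hg0 m q).2
    rw [hqg] at h
    rw [h, hq2]
  have hva : ∀ (t : ZMod Np) (c : ℕ), ((t + (c : ZMod Np)).val) % Np = (t.val + c) % Np := by
    intro t c
    rw [ZMod.val_add, ZMod.val_natCast, Nat.mod_mod_of_dvd _ (dvd_refl Np)]
    conv_rhs => rw [Nat.add_mod]
    rw [Nat.mod_eq_of_lt (ZMod.val_lt t)]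
  have hwin : WindowOk F L := by
    have main : ∀ (t : ZMod Np) (i : Fin (k₁+k₂)) (a b : ℕ), a < L → b < L → a < b →
        ¬(EdgeInDim F i (t + (a : ZMod Np)) ∧ EdgeInDim F i (t + (b : ZMod Np))) := by
      intro t i a b ha hb hab
      obtain ⟨pa1, pa2, pa3⟩ := hred ((t + (a : ZMod Np)).val) (t.val + a) (hva t a)
      obtain ⟨pb1, pb2, pb3⟩ := hred ((t + (b : ZMod Np)).val) (t.val + b) (hva t b)
      induction i using Fin.addCases with
      | left i₁ =>
          rintro ⟨hea, heb⟩
          obtain ⟨ca, ea⟩ := hedge1 _ i₁ hea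
          obtain ⟨cb, eb⟩ := hedge1 _ i₁ heb
          have hsa : posA g s₁ (t.val + a + 1) = posA g s₁ (t.val + a) + 1 :=
            (posA_stepA (g := g) (s₁ := s₁) hs₂ hsum (by rw [← pa3]; exact ca)).1
          have hsb : posA g s₁ (t.val + b + 1) = posA g s₁ (t.val + b) + 1 :=
            (posA_stepA (g := g) (s₁ := s₁) hs₂ hsum (by rw [← pb3]; exact cb)).1
          obtain ⟨w1, w2, w3, w4, w5⟩ :=
            windows_arith (posA g s₁) L r₁ hmonoA hLA t.val a b ha hb hab hsa hsb
          refine hw₁ ((posA g s₁ t.val : ℕ) : ZMod N₁) i₁ _ _ w3 w4 w5 ⟨?_, ?_⟩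
          · have hc : ((posA g s₁ t.val : ℕ) : ZMod N₁) +
                ((posA g s₁ (t.val + a) - posA g s₁ t.val : ℕ) : ZMod N₁)
                = ((posA g s₁ (t.val + a) : ℕ) : ZMod N₁) := by
              rw [← Nat.cast_add, w1]
            rw [hc, ← pa1]
            exact ea
          · have hc : ((posA g s₁ t.val : ℕ) : ZMod N₁) +
                ((posA g s₁ (t.val + b) - posA g s₁ t.val : ℕ) : ZMod N₁)
                = ((posA g s₁ (t.val + b) : ℕ) : ZMod N₁) := by
              rw [← Nat.cast_add, w2]
            rw [hc, ← pb1]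
            exact eb
      | right i₂ =>
          rintro ⟨hea, heb⟩
          obtain ⟨ca, ea⟩ := hedge2 _ i₂ hea
          obtain ⟨cb, eb⟩ := hedge2 _ i₂ heb
          have hsa : posB g s₁ s₂ (t.val + a + 1) = posB g s₁ s₂ (t.val + a) + 1 :=
            (posA_stepB (g := g) hs₁ hsum (n := t.val + a) (by rw [← pa3]; exact ca)).2
          have hsb : posB g s₁ s₂ (t.val + b + 1) = posB g s₁ s₂ (t.val + b) + 1 :=
            (posA_stepB (g := g) hs₁ hsum (n := t.val + b) (by rw [← pb3]; exact cb)).2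
          obtain ⟨w1, w2, w3, w4, w5⟩ :=
            windows_arith (posB g s₁ s₂) L r₂ hmonoB hLB t.val a b ha hb hab hsa hsb
          refine hw₂ ((posB g s₁ s₂ t.val : ℕ) : ZMod N₂) i₂ _ _ w3 w4 w5 ⟨?_, ?_⟩
          · have hc : ((posB g s₁ s₂ t.val : ℕ) : ZMod N₂) +
                ((posB g s₁ s₂ (t.val + a) - posB g s₁ s₂ t.val : ℕ) : ZMod N₂)
                = ((posB g s₁ s₂ (t.val + a) : ℕ) : ZMod N₂) := by
              rw [← Nat.cast_add, w1]
            rw [hc, ← pa2]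
            exact ea
          · have hc : ((posB g s₁ s₂ t.val : ℕ) : ZMod N₂) +
                ((posB g s₁ s₂ (t.val + b) - posB g s₁ s₂ t.val : ℕ) : ZMod N₂)
                = ((posB g s₁ s₂ (t.val + b) : ℕ) : ZMod N₂) := by
              rw [← Nat.cast_add, w2]
            rw [hc, ← pb2]
            exact eb
    intro t i a b ha hb hab
    rcases Nat.lt_or_ge a b with h | h
    · exact main t i a b ha hb h
    · have h' : b < a := by omega
      rintro ⟨hea, heb⟩
      exact main t i b a hb ha h' ⟨heb, hea⟩
  exact le_mrl hszP hHam (by omega) hwin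

/-- **Corollary (basic corollary).**  Let `G₁` and `G₂` be tori, each admitting
a Hamiltonian cycle, and suppose positive integers `s₁, s₂` satisfy
`gcd(|G₁|, s₁) = 1`, `gcd(|G₂|, s₂) = 1` and `s₁ + s₂ = gcd(|G₁|, |G₂|)`.
If moreover `s₁ · mrl(G₂) = s₂ · mrl(G₁)`, then
`mrl(G₁ × G₂) ≥ mrl(G₁) + mrl(G₂)`. -/
theorem composition_run_length_balanced
    (k₁ k₂ : ℕ) (sz₁ : Fin k₁ → ℕ) (sz₂ : Fin k₂ → ℕ)
    (hsz₁ : ∀ i, 3 ≤ sz₁ i) (hsz₂ : ∀ i, 3 ≤ sz₂ i)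
    (hG₁ : ∃ f, IsHamCycle (k := k₁) (sz := sz₁) f)
    (hG₂ : ∃ f, IsHamCycle (k := k₂) (sz := sz₂) f)
    (s₁ s₂ : ℕ) (hs₁ : 0 < s₁) (hs₂ : 0 < s₂)
    (hg₁ : Nat.gcd (torusCard k₁ sz₁) s₁ = 1)
    (hg₂ : Nat.gcd (torusCard k₂ sz₂) s₂ = 1)
    (hsum : s₁ + s₂ = Nat.gcd (torusCard k₁ sz₁) (torusCard k₂ sz₂))
    (hratio : s₁ * mrl k₂ sz₂ = s₂ * mrl k₁ sz₁) :
    mrl k₁ sz₁ + mrl k₂ sz₂ ≤ mrl (k₁ + k₂) (Fin.append sz₁ sz₂) := by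
  obtain ⟨f₁, hf₁, -, hr₁, hw₁⟩ := mrl_attained hsz₁ hG₁
  obtain ⟨f₂, hf₂, -, hr₂, hw₂⟩ := mrl_attained hsz₂ hG₂
  exact main_aux hsz₁ hsz₂ hf₁ hf₂ s₁ s₂ (mrl k₁ sz₁) (mrl k₂ sz₂) hs₁ hs₂ hg₁ hg₂ hsum
    hr₁ hr₂ hw₁ hw₂ hratio
end

section
/- Let G = γ₁ × γ₂ × ⋯ × γ_k be a torus admitting a Hamiltonian cycle, and let γ_{k+1} be a cycle graph whose number of vertices is a multiple of the number of vertices of γ_j for some j ≤ k. Then the (k+1)-dimensional torus G × γ_{k+1} admits a Hamiltonian cycle and mrl(G × γ_{k+1}) ≥ mrl(G). -/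
/-!
Take a Hamiltonian cycle `f` of `G` on `N` vertices, rotated so that its edge `f (-1) → f 0`
lies in a dimension `j` with `|γ_j| ∣ m`, and let `d = f 0 - f (-1)`. Go around `f` `m` times,
and at time `T`, during lap `c = T / N`, stand at `(f T - c • d, c) ∈ G × γ`. Every traversal of
the edge `f (-1) → f 0` becomes a step in the new dimension, every other step is the step of `f`.
As `m • d = 0`, the walk closes up after `N * m` steps, and since the last coordinate records the
lap modulo `m` it visits every vertex exactly once. A window of `r ≤ N` consecutive steps projects
onto a window of `f` and contains at most one step in the new dimension, so every window that is
good for `f` is good for the new cycle.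
-/

lemma torusCard_ne_zero {k : ℕ} {sz : Fin k → ℕ} (hsz : ∀ i, sz i ≠ 0) : torusCard k sz ≠ 0 :=
  Finset.prod_ne_zero_iff.mpr fun i _ => hsz i

lemma torusCard_succ {k : ℕ} (sz : Fin (k + 1) → ℕ) :
    torusCard (k + 1) sz = torusCard k (fun i => sz i.castSucc) * sz (Fin.last k) :=
  Fin.prod_univ_castSucc sz

lemma Nat.card_torusVtx (k : ℕ) (sz : Fin k → ℕ) : Nat.card (TorusVtx k sz) = torusCard k sz := by
  simp only [TorusVtx, Nat.card_pi, Nat.card_zmod, torusCard]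

lemma Nat.succ_div_eq_ite_zmod (T n : ℕ) :
    (T + 1) / n = T / n + if (T : ZMod n) = -1 then 1 else 0 := by
  simp only [Nat.succ_div, eq_neg_iff_add_eq_zero, ← Nat.cast_succ, ZMod.natCast_eq_zero_iff]

lemma Function.Periodic.apply_val_add {α : Type*} {G : ℕ → α} {M : ℕ} [NeZero M]
    (hG : Function.Periodic G M) (t : ZMod M) (a : ℕ) : G (t + a).val = G (t.val + a) := by
  rw [← hG.map_mod_nat (t.val + a), ZMod.val_add, ZMod.val_natCast, Nat.add_mod_mod]

section Adjacency

variable {k : ℕ}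

lemma TorusAdj.sub_right {sz : Fin k → ℕ} {v w : ∀ i, ZMod (sz i)} (h : TorusAdj (sz := sz) v w)
    (x : ∀ i, ZMod (sz i)) : TorusAdj (sz := sz) (v - x) (w - x) := by
  obtain ⟨i, hi, hother⟩ := h
  refine ⟨i, ?_, fun j hj => by simp only [Pi.sub_apply, hother j hj]⟩
  simp only [Pi.sub_apply]
  rcases hi with hi | hi
  · left; rw [hi]; ring
  · right; rw [hi]; ring

lemma TorusAdj.nsmul_sub_eq_zero {sz : Fin k → ℕ} {u v : ∀ i, ZMod (sz i)}
    (h : TorusAdj (sz := sz) u v) {j : Fin k} (hj : u j ≠ v j) {m : ℕ} (hm : sz j ∣ m) :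
    m • (v - u) = 0 := by
  obtain ⟨i, -, hother⟩ := h
  funext l
  by_cases hl : l = j
  · subst hl
    simp [nsmul_eq_mul, (ZMod.natCast_eq_zero_iff _ _).mpr hm]
  · have hij : j = i := by_contra fun hji => hj (hother j hji)
    simp [hother l (hij ▸ hl)]

variable {sz : Fin (k + 1) → ℕ}

/- The torus `G × γ` has sizes `sz`, and `G` has sizes `fun i => sz i.castSucc` (rather than `sz`
and `Fin.snoc sz m`), so that `Fin.snoc` glues vertices of `G` and `γ` without casts. -/
lemma TorusAdj.snoc {v w : ∀ i : Fin k, ZMod (sz i.castSucc)}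
    (h : TorusAdj (sz := fun i => sz i.castSucc) v w) (x : ZMod (sz (Fin.last k))) :
    TorusAdj (sz := sz) (Fin.snoc (α := fun i => ZMod (sz i)) v x)
      (Fin.snoc (α := fun i => ZMod (sz i)) w x) := by
  obtain ⟨i, hi, hother⟩ := h
  refine ⟨i.castSucc, by simpa using hi, fun j hj => ?_⟩
  induction j using Fin.lastCases with
  | last => simp
  | cast j => simpa using hother j (fun h => hj (h ▸ rfl))

lemma torusAdj_snoc_snoc {x y : ZMod (sz (Fin.last k))} (h : y = x + 1 ∨ x = y + 1)
    (v : ∀ i : Fin k, ZMod (sz i.castSucc)) :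
    TorusAdj (sz := sz) (Fin.snoc (α := fun i => ZMod (sz i)) v x)
      (Fin.snoc (α := fun i => ZMod (sz i)) v y) := by
  refine ⟨Fin.last k, by simpa using h, fun j hj => ?_⟩
  obtain ⟨j, rfl⟩ := Fin.exists_castSucc_eq.mpr hj
  simp

end Adjacency

section HamCycle

variable {k : ℕ} {sz : Fin k → ℕ} {f : ZMod (torusCard k sz) → TorusVtx k sz}

lemma IsHamCycle.comp_add_right (hf : IsHamCycle f) (a : ZMod (torusCard k sz)) :
    IsHamCycle fun t => f (t + a) :=
  ⟨hf.1.comp (Equiv.addRight a).bijective,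
    fun t => by simpa only [add_right_comm t 1 a] using hf.2 (t + a)⟩

lemma WindowOk.comp_add_right {r : ℕ} (hw : WindowOk f r) (a : ZMod (torusCard k sz)) :
    WindowOk (fun t => f (t + a)) r := fun t i b c hb hc hbc => by
  simpa only [EdgeInDim, add_right_comm _ _ a] using hw (t + a) i b c hb hc hbc

lemma IsHamCycle.exists_edgeInDim (hf : IsHamCycle f) {j : Fin k} (hj : 1 < sz j) :
    ∃ s, EdgeInDim f j s := by
  by_contra! h
  have hper : Function.Periodic (fun t => f t j) 1 := fun t => (not_not.mp (h t)).symm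
  have hconst (t) : f t j = f 0 j := by
    simpa [ZMod.intCast_zmod_cast] using hper.int_mul_eq (ZMod.cast t : ℤ)
  have : Fact (1 < sz j) := ⟨hj⟩
  obtain ⟨t, ht⟩ := hf.1.2 (Function.update (f 0) j (f 0 j + 1))
  have htj : f t j = f 0 j + 1 := (congrFun ht j).trans (Function.update_self ..)
  rw [hconst] at htj
  simp at htj

variable [NeZero (torusCard k sz)] {G : ℕ → TorusVtx k sz}

lemma isHamCycle_of_periodic (hG : Function.Periodic G (torusCard k sz))
    (hadj : ∀ T, TorusAdj (G T) (G (T + 1))) (hinj : Set.InjOn G (Set.Iio (torusCard k sz))) :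
    IsHamCycle fun t => G t.val := by
  have hinj' : Function.Injective fun t : ZMod (torusCard k sz) => G t.val :=
    fun t t' h => ZMod.val_injective _ (hinj t.val_lt t'.val_lt h)
  have : Finite (TorusVtx k sz) :=
    Nat.finite_of_card_ne_zero ((Nat.card_torusVtx k sz).trans_ne (NeZero.ne _))
  refine ⟨hinj'.bijective_of_nat_card_le (by rw [Nat.card_torusVtx, Nat.card_zmod]), fun t => ?_⟩
  have h := hG.apply_val_add t 1
  rw [Nat.cast_one] at h
  simpa only [h] using hadj t.val

lemma edgeInDim_val_add (hG : Function.Periodic G (torusCard k sz)) (i : Fin k)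
    (t : ZMod (torusCard k sz)) (a : ℕ) :
    EdgeInDim (fun t => G t.val) i (t + a) ↔ G (t.val + a) i ≠ G (t.val + a + 1) i := by
  rw [EdgeInDim, add_assoc, ← Nat.cast_one, ← Nat.cast_add, hG.apply_val_add, hG.apply_val_add,
    add_assoc]

end HamCycle

section Lift

variable {k : ℕ} {sz : Fin (k + 1) → ℕ}

def shear (d v : ∀ i : Fin k, ZMod (sz i.castSucc)) (c : ℕ) : ∀ i, ZMod (sz i) :=
  Fin.snoc (α := fun i => ZMod (sz i)) (v - c • d) c

variable {d : ∀ i : Fin k, ZMod (sz i.castSucc)}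

lemma shear_add_card (hd : sz (Fin.last k) • d = 0) (v : ∀ i : Fin k, ZMod (sz i.castSucc))
    (c : ℕ) : shear d v (c + sz (Fin.last k)) = shear d v c := by
  simp only [shear, add_nsmul, hd, add_zero, Nat.cast_add, ZMod.natCast_self]

lemma eq_and_modEq_of_shear_eq (hd : sz (Fin.last k) • d = 0)
    {v w : ∀ i : Fin k, ZMod (sz i.castSucc)} {c c' : ℕ} (h : shear d v c = shear d w c') :
    v = w ∧ c ≡ c' [MOD sz (Fin.last k)] := by
  have hc : c ≡ c' [MOD sz (Fin.last k)] := by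
    simpa [shear, ZMod.natCast_eq_natCast_iff] using congrFun h (Fin.last k)
  refine ⟨?_, hc⟩
  simpa [shear, nsmul_eq_nsmul_of_modEq hc hd] using congrArg Fin.init h

lemma TorusAdj.shear {v w : ∀ i : Fin k, ZMod (sz i.castSucc)}
    (h : TorusAdj (sz := fun i => sz i.castSucc) v w) (c : ℕ) :
    TorusAdj (sz := sz) (shear d v c) (shear d w c) :=
  (h.sub_right _).snoc _

lemma torusAdj_shear_succ {v : ∀ i : Fin k, ZMod (sz i.castSucc)} (c : ℕ) :
    TorusAdj (sz := sz) (shear d v c) (shear d (v + d) (c + 1)) := by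
  have : v + d - (c + 1) • d = v - c • d := by rw [succ_nsmul]; abel
  rw [shear, shear, this, Nat.cast_succ]
  exact torusAdj_snoc_snoc (Or.inl rfl) _

variable {n : ℕ} {f : ZMod n → ∀ i : Fin k, ZMod (sz i.castSucc)}

def liftWalk (f : ZMod n → ∀ i : Fin k, ZMod (sz i.castSucc)) (T : ℕ) : ∀ i, ZMod (sz i) :=
  shear (f 0 - f (-1)) (f T) (T / n)

lemma liftWalk_succ_of_eq {T : ℕ} (hT : (T : ZMod n) = -1) :
    liftWalk f (T + 1) = shear (f 0 - f (-1)) (f 0) (T / n + 1) := by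
  rw [liftWalk, Nat.succ_div_eq_ite_zmod, if_pos hT, Nat.cast_succ, hT, neg_add_cancel]

lemma liftWalk_succ_of_ne {T : ℕ} (hT : (T : ZMod n) ≠ -1) :
    liftWalk f (T + 1) = shear (f 0 - f (-1)) (f (T + 1)) (T / n) := by
  rw [liftWalk, Nat.succ_div_eq_ite_zmod, if_neg hT, add_zero, Nat.cast_succ]

lemma liftWalk_periodic [NeZero n] (hd : sz (Fin.last k) • (f 0 - f (-1)) = 0) :
    Function.Periodic (liftWalk f) (n * sz (Fin.last k)) := fun T => by
  rw [liftWalk, liftWalk, Nat.add_mul_div_left _ _ (Nat.pos_of_neZero n), Nat.cast_add,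
    Nat.cast_mul, ZMod.natCast_self, zero_mul, add_zero, shear_add_card hd]

lemma torusAdj_liftWalk (hf : ∀ t, TorusAdj (f t) (f (t + 1))) (T : ℕ) :
    TorusAdj (sz := sz) (liftWalk f T) (liftWalk f (T + 1)) := by
  by_cases hT : (T : ZMod n) = -1
  · rw [liftWalk_succ_of_eq hT, liftWalk, hT]
    have h := torusAdj_shear_succ (d := f 0 - f (-1)) (v := f (-1)) (T / n)
    rwa [add_sub_cancel] at h
  · rw [liftWalk_succ_of_ne hT, liftWalk]
    exact (hf T).shear _

lemma liftWalk_injOn (hf : Function.Injective f) (hd : sz (Fin.last k) • (f 0 - f (-1)) = 0) :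
    Set.InjOn (liftWalk f) (Set.Iio (n * sz (Fin.last k))) := by
  intro T hT T' hT' h
  obtain ⟨hfT, hq⟩ := eq_and_modEq_of_shear_eq hd h
  have hr : T % n = T' % n := (ZMod.natCast_eq_natCast_iff' _ _ _).mp (hf hfT)
  have hq' : T / n = T' / n :=
    hq.eq_of_lt_of_lt (Nat.div_lt_of_lt_mul hT) (Nat.div_lt_of_lt_mul hT')
  rw [← Nat.div_add_mod T n, ← Nat.div_add_mod T' n, hq', hr]

lemma liftWalk_succ_castSucc {T : ℕ} {i : Fin k} (h : f T i = f (T + 1) i) :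
    liftWalk f (T + 1) i.castSucc = liftWalk f T i.castSucc := by
  by_cases hT : (T : ZMod n) = -1
  · rw [hT, neg_add_cancel] at h
    rw [liftWalk_succ_of_eq hT, liftWalk, hT]
    simp only [shear, Fin.snoc_castSucc, Pi.sub_apply, Pi.smul_apply, h, sub_self, smul_zero]
  · rw [liftWalk_succ_of_ne hT, liftWalk]
    simp only [shear, Fin.snoc_castSucc, Pi.sub_apply, h]

lemma liftWalk_succ_last {T : ℕ} (hT : (T : ZMod n) ≠ -1) :
    liftWalk f (T + 1) (Fin.last k) = liftWalk f T (Fin.last k) := by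
  rw [liftWalk_succ_of_ne hT, liftWalk]
  simp only [shear, Fin.snoc_last]

end Lift

section LiftCycle

variable {k : ℕ} {sz : Fin (k + 1) → ℕ}

lemma windowOk_liftWalk [NeZero (torusCard (k + 1) sz)]
    {f : ZMod (torusCard k (fun i => sz i.castSucc)) → ∀ i : Fin k, ZMod (sz i.castSucc)}
    (hd : sz (Fin.last k) • (f 0 - f (-1)) = 0) {r : ℕ}
    (hr : r ≤ torusCard k (fun i => sz i.castSucc)) (hw : WindowOk f r) :
    WindowOk (fun t : ZMod (torusCard (k + 1) sz) => liftWalk f t.val) r := by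
  have : NeZero (torusCard k (fun i => sz i.castSucc)) :=
    ⟨left_ne_zero_of_mul ((torusCard_succ sz).symm.trans_ne (NeZero.ne _))⟩
  have hper : Function.Periodic (liftWalk f) (torusCard (k + 1) sz) :=
    torusCard_succ sz ▸ liftWalk_periodic hd
  intro t i a b ha hb hab ⟨hea, heb⟩
  rw [edgeInDim_val_add hper] at hea heb
  induction i using Fin.lastCases with
  | last =>
    have hlast {c : ℕ}
        (hc : liftWalk f (t.val + c) (Fin.last k) ≠ liftWalk f (t.val + c + 1) (Fin.last k)) :
        ((t.val + c : ℕ) : ZMod (torusCard k (fun i => sz i.castSucc))) = -1 :=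
      by_contra fun h => hc (liftWalk_succ_last h).symm
    have hab' := (hlast hea).trans (hlast heb).symm
    rw [Nat.cast_add, Nat.cast_add, add_right_inj, ZMod.natCast_eq_natCast_iff',
      Nat.mod_eq_of_lt (by omega), Nat.mod_eq_of_lt (by omega)] at hab'
    exact hab hab'
  | cast i =>
    have hedge {c : ℕ}
        (hc : liftWalk f (t.val + c) i.castSucc ≠ liftWalk f (t.val + c + 1) i.castSucc) :
        EdgeInDim f i (t.val + c) :=
      fun h => hc (liftWalk_succ_castSucc (by exact_mod_cast h)).symm
    exact hw t.val i a b ha hb hab ⟨hedge hea, hedge heb⟩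

theorem IsHamCycle.exists_isHamCycle_snoc (hsz : ∀ i, 1 < sz i)
    {j : Fin k} (hj : sz j.castSucc ∣ sz (Fin.last k))
    {f : ZMod (torusCard k (fun i => sz i.castSucc)) → TorusVtx k (fun i => sz i.castSucc)}
    (hf : IsHamCycle f) :
    ∃ g : ZMod (torusCard (k + 1) sz) → TorusVtx (k + 1) sz, IsHamCycle g ∧
      ∀ r ≤ torusCard k (fun i => sz i.castSucc), WindowOk f r → WindowOk g r := by
  have : NeZero (torusCard (k + 1) sz) := ⟨torusCard_ne_zero fun i => Nat.ne_zero_of_lt (hsz i)⟩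
  have : NeZero (torusCard k (fun i => sz i.castSucc)) :=
    ⟨torusCard_ne_zero fun i => Nat.ne_zero_of_lt (hsz i.castSucc)⟩
  obtain ⟨s, hs⟩ := hf.exists_edgeInDim (hsz j.castSucc)
  set f' : ZMod _ → ∀ i : Fin k, ZMod (sz i.castSucc) := fun t => f (t + (s + 1))
  have hf' : IsHamCycle f' := hf.comp_add_right _
  have hd : sz (Fin.last k) • (f' 0 - f' (-1)) = 0 := by
    simpa only [f', zero_add, show -1 + (s + 1) = s by ring]
      using (hf.2 s).nsmul_sub_eq_zero hs hj
  refine ⟨fun t => liftWalk f' t.val, isHamCycle_of_periodic ?_ (torusAdj_liftWalk hf'.2) ?_,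
    fun r hr hw => windowOk_liftWalk hd hr (hw.comp_add_right _)⟩ <;> rw [torusCard_succ]
  · exact liftWalk_periodic hd
  · exact liftWalk_injOn hf'.1.1 hd

end LiftCycle

section RunLength

variable {k : ℕ} {sz : Fin k → ℕ} {f : ZMod (torusCard k sz) → TorusVtx k sz}

lemma windowOk_one : WindowOk f 1 := fun _ _ _ _ ha hb hab => absurd (by omega) hab

lemma IsHamCycle.le_torusCard_of_windowOk (hsz : ∀ i, 1 < sz i) (hf : IsHamCycle f) {r : ℕ}
    (hr : WindowOk f r) : r ≤ torusCard k sz := by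
  -- a window longer than the cycle sees the edge at position `0 = torusCard k sz` twice
  by_contra! hlt
  obtain ⟨i, hi, -⟩ := hf.2 0
  have : Fact (1 < sz i) := ⟨hsz i⟩
  rw [zero_add] at hi
  have h0 : EdgeInDim f i 0 := by rcases hi with hi | hi <;> simp [EdgeInDim, hi]
  exact hr 0 i 0 (torusCard k sz) (by omega) hlt
    (torusCard_ne_zero fun i => Nat.ne_zero_of_lt (hsz i)).symm
    ⟨by simpa using h0, by simpa using h0⟩

lemma IsHamCycle.bddAbove_windowOk (hsz : ∀ i, 1 < sz i) (hf : IsHamCycle f) :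
    BddAbove {r | 1 ≤ r ∧ WindowOk f r} :=
  ⟨torusCard k sz, fun _ hr => hf.le_torusCard_of_windowOk hsz hr.2⟩

lemma IsHamCycle.windowOk_runLength (hsz : ∀ i, 1 < sz i) (hf : IsHamCycle f) :
    WindowOk f (runLength f) :=
  (Nat.sSup_mem (s := {r | 1 ≤ r ∧ WindowOk f r}) ⟨1, le_rfl, windowOk_one⟩
    (hf.bddAbove_windowOk hsz)).2

lemma IsHamCycle.le_runLength (hsz : ∀ i, 1 < sz i) (hf : IsHamCycle f) {r : ℕ} (hr : 1 ≤ r)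
    (hw : WindowOk f r) : r ≤ runLength f :=
  le_csSup (hf.bddAbove_windowOk hsz) ⟨hr, hw⟩

lemma IsHamCycle.runLength_le_mrl (hsz : ∀ i, 1 < sz i) (hf : IsHamCycle f) :
    runLength f ≤ mrl k sz :=
  le_csSup ⟨torusCard k sz, by
    rintro _ ⟨g, hg, rfl⟩
    exact hg.le_torusCard_of_windowOk hsz (hg.windowOk_runLength hsz)⟩ ⟨f, hf, rfl⟩

end RunLength

lemma mrl_le_mrl_of_forall_windowOk {k k' : ℕ} {sz : Fin k → ℕ} {sz' : Fin k' → ℕ}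
    (hsz : ∀ i, 1 < sz i) (hsz' : ∀ i, 1 < sz' i)
    (h : ∀ f, IsHamCycle (k := k) (sz := sz) f → ∃ g, IsHamCycle (k := k') (sz := sz') g ∧
      ∀ r ≤ torusCard k sz, WindowOk f r → WindowOk g r) :
    mrl k sz ≤ mrl k' sz' := by
  refine csSup_le' ?_
  rintro _ ⟨f, hf, rfl⟩
  obtain ⟨g, hg, hwin⟩ := h f hf
  have hw := hf.windowOk_runLength hsz
  calc runLength f
      ≤ runLength g := hg.le_runLength hsz' (hf.le_runLength hsz le_rfl windowOk_one)
        (hwin _ (hf.le_torusCard_of_windowOk hsz hw) hw)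
    _ ≤ mrl k' sz' := hg.runLength_le_mrl hsz'

/-- **Theorem 3 (adding an extra dimension, multiple case).**  Let
`G = γ₁ × ⋯ × γ_k` be a torus admitting a Hamiltonian cycle, and let
`γ_{k+1}` be a cycle graph (on `m ≥ 3` vertices) whose number of vertices is
a multiple of the number of vertices of `γ_j` for some `j ≤ k`.  Then the
`(k+1)`-dimensional torus `G × γ_{k+1}` admits a Hamiltonian cycle and
`mrl(G × γ_{k+1}) ≥ mrl(G)`. -/
theorem mrl_extra_dimension_of_multiple
    (k : ℕ) (sz : Fin k → ℕ) (hsz : ∀ i, 3 ≤ sz i)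
    (hG : ∃ f, IsHamCycle (k := k) (sz := sz) f)
    (m : ℕ) (hm : 3 ≤ m)
    (hmul : ∃ j : Fin k, sz j ∣ m) :
    (∃ f, IsHamCycle (k := k + 1) (sz := Fin.snoc sz m) f) ∧
      mrl k sz ≤ mrl (k + 1) (Fin.snoc sz m) := by
  obtain ⟨j, hj⟩ := hmul
  have hsz' : ∀ i, 1 < Fin.snoc (α := fun _ => ℕ) sz m i :=
    Fin.lastCases (by simp only [Fin.snoc_last]; omega)
      fun i => by simp only [Fin.snoc_castSucc]; linarith [hsz i]
  have hinit : (fun i => Fin.snoc (α := fun _ => ℕ) sz m i.castSucc) = sz :=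
    funext fun i => Fin.snoc_castSucc ..
  have hlift := fun f hf =>
    IsHamCycle.exists_isHamCycle_snoc hsz' (j := j) (by simpa using hj) (f := f) hf
  rw [hinit] at hlift
  obtain ⟨f, hf⟩ := hG
  exact ⟨(hlift f hf).imp fun _ hg => hg.1,
    mrl_le_mrl_of_forall_windowOk (fun i => by linarith [hsz i]) hsz' hlift⟩
end

section
/- Let m, n ≥ 2 and let s₁, s₂ be positive integers with gcd(m, s₁) = 1, gcd(n, s₂) = 1, and s₁ + s₂ = gcd(m, n). Then the Cartesian product of the directed cycles on m and n vertices (arcs (x, y) → (x+1, y) and (x, y) → (x, y+1) on ℤ/m × ℤ/n) admits a directed Hamiltonian cycle H such that every gcd(m, n) consecutive arcs of H contain exactly s₁ arcs in the first dimension and exactly s₂ arcs in the second dimension. -/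
/-!
The Cartesian product of the directed cycles on `m` and `n` vertices is the
digraph on `ZMod m × ZMod n` with arcs `(x, y) → (x+1, y)` (said to be in the
first dimension) and `(x, y) → (x, y+1)` (said to be in the second dimension).
A directed Hamiltonian cycle is a cyclic enumeration `H : ZMod (m*n) → ZMod m
× ZMod n` of all `m*n` vertices following the arc directions; windows of
consecutive arcs are read cyclically.
-/

/-- There is an arc from `u` to `v` in the Cartesian product of the directed
cycles on `m` and `n` vertices. -/
def DirProdStep {m n : ℕ} (u v : ZMod m × ZMod n) : Prop :=
  (v.1 = u.1 + 1 ∧ v.2 = u.2) ∨ (v.1 = u.1 ∧ v.2 = u.2 + 1)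

/-- A directed Hamiltonian cycle of the Cartesian product of the directed
cycles on `m` and `n` vertices. -/
def IsDirHamCycle2 {m n : ℕ} (H : ZMod (m * n) → ZMod m × ZMod n) : Prop :=
  Function.Bijective H ∧ ∀ t, DirProdStep (H t) (H (t + 1))

/-- The arc of `H` at position `s` is in the first dimension. -/
def ArcInDim1 {m n : ℕ} (H : ZMod (m * n) → ZMod m × ZMod n)
    (s : ZMod (m * n)) : Prop :=
  (H (s + 1)).1 = (H s).1 + 1 ∧ (H (s + 1)).2 = (H s).2

/-- The arc of `H` at position `s` is in the second dimension. -/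
def ArcInDim2 {m n : ℕ} (H : ZMod (m * n) → ZMod m × ZMod n)
    (s : ZMod (m * n)) : Prop :=
  (H (s + 1)).1 = (H s).1 ∧ (H (s + 1)).2 = (H s).2 + 1


instance {m n : ℕ} (H : ZMod (m * n) → ZMod m × ZMod n) (s : ZMod (m * n)) :
    Decidable (ArcInDim1 H s) :=
  inferInstanceAs (Decidable (_ ∧ _))

instance {m n : ℕ} (H : ZMod (m * n) → ZMod m × ZMod n) (s : ZMod (m * n)) :
    Decidable (ArcInDim2 H s) :=
  inferInstanceAs (Decidable (_ ∧ _))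

/-- Every window of `w` consecutive arcs of `H` contains exactly `s₁` arcs in
the first dimension and exactly `s₂` arcs in the second dimension. -/
def WindowCounts {m n : ℕ} (H : ZMod (m * n) → ZMod m × ZMod n)
    (w s₁ s₂ : ℕ) : Prop :=
  ∀ t : ZMod (m * n),
    ((Finset.range w).filter (fun a => ArcInDim1 H (t + (a : ℕ)))).card = s₁ ∧
    ((Finset.range w).filter (fun a => ArcInDim2 H (t + (a : ℕ)))).card = s₂

/-!
The cycle is the staircase walk whose `k`-th arc goes in the first dimension iff
`k mod d < s₁`, where `d = gcd(m, n)`. After `k` arcs it sits at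
`(#first-dimension arcs, #second-dimension arcs)`, which advances by `(s₁, s₂)` every `d`
arcs, so it closes up after `m n = d · lcm(m, n)` arcs, and every window of `d` arcs has
the required counts. If the walk is at the same vertex after `k ≤ l < m n` arcs, then
`k ≡ l (mod d)`, because `d` divides `m` and `n` and the two coordinates add up to the
number of arcs; writing `l = k + d e`, the coordinates give `m ∣ e s₁` and `n ∣ e s₂`,
so coprimality forces `lcm(m, n) ∣ e`, that is `m n ∣ l - k`, and `k = l`.
Nothing here depends on the particular `d`-periodic pattern of arcs beyond the two
coprimality conditions.
-/

open Function

namespace Nat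

variable {p : ℕ → Prop} [DecidablePred p]

variable (p) in
theorem count_add_count_not (k : ℕ) :
    count p k + count (fun i => ¬ p i) k = k := by
  induction k with
  | zero => simp
  | succ k ih => rw [count_succ, count_succ]; split_ifs <;> omega

theorem count_add_left_of_periodic {d : ℕ} (hp : Periodic p d) (c : ℕ) :
    count (fun k => p (c + k)) d = count p d := by
  induction c with
  | zero => simp
  | succ c ih =>
    have h₁ := count_succ (fun k => p (c + k)) d
    have h₂ := count_succ' (fun k => p (c + k)) d
    simp only [hp c, Nat.add_zero, ← add_assoc] at h₁ h₂
    rw [← ih]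
    simp only [add_right_comm c 1]
    omega

theorem count_add_mul_of_periodic {d : ℕ} (hp : Periodic p d) (k e : ℕ) :
    count p (k + d * e) = count p k + e * count p d := by
  induction e with
  | zero => simp
  | succ e ih =>
    rw [Nat.mul_succ, ← add_assoc, count_add, ih, count_add_left_of_periodic hp]
    ring

theorem count_mod_lt {d s : ℕ} (hs : s ≤ d) : count (fun i => i % d < s) d = s := by
  obtain ⟨r, rfl⟩ := Nat.exists_eq_add_of_le hs
  rw [count_add, count_of_forall (fun i hi => by rwa [Nat.mod_eq_of_lt (by omega)]),
    count_of_forall_not (fun i hi => by rw [Nat.mod_eq_of_lt (by omega)]; omega), Nat.add_zero]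

end Nat

namespace DirTorus

open Nat

variable {m n : ℕ} {p : ℕ → Prop} [DecidablePred p]

variable (m n p) in
def patternWalk (k : ℕ) : ZMod m × ZMod n :=
  (count p k, count (fun i => ¬ p i) k)

theorem patternWalk_succ_of_pos {k : ℕ} (h : p k) :
    patternWalk m n p (k + 1) = ((patternWalk m n p k).1 + 1, (patternWalk m n p k).2) := by
  simp [patternWalk, count_succ, h]

theorem patternWalk_succ_of_neg {k : ℕ} (h : ¬ p k) :
    patternWalk m n p (k + 1) = ((patternWalk m n p k).1, (patternWalk m n p k).2 + 1) := by
  simp [patternWalk, count_succ, h]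

theorem dirProdStep_patternWalk (k : ℕ) :
    DirProdStep (patternWalk m n p k) (patternWalk m n p (k + 1)) := by
  by_cases h : p k
  · exact Or.inl (by simp [patternWalk_succ_of_pos h])
  · exact Or.inr (by simp [patternWalk_succ_of_neg h])

theorem patternWalk_add_mul {d : ℕ} (hp : Periodic p d) (k e : ℕ) :
    patternWalk m n p (k + d * e) =
      ((patternWalk m n p k).1 + (e * count p d : ℕ),
        (patternWalk m n p k).2 + (e * count (fun i => ¬ p i) d : ℕ)) := by
  simp only [patternWalk, count_add_mul_of_periodic hp,
    count_add_mul_of_periodic (p := fun i => ¬ p i) (hp.comp Not), Nat.cast_add]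

theorem periodic_patternWalk (hp : Periodic p (m.gcd n)) :
    Periodic (patternWalk m n p) (m * n) := by
  intro k
  rw [← Nat.gcd_mul_lcm m n, patternWalk_add_mul hp]
  simp only [(ZMod.natCast_eq_zero_iff _ _).mpr (dvd_mul_of_dvd_left (Nat.dvd_lcm_left m n) _),
    (ZMod.natCast_eq_zero_iff _ _).mpr (dvd_mul_of_dvd_left (Nat.dvd_lcm_right m n) _), add_zero]

theorem modEq_gcd_of_patternWalk_eq {k l : ℕ} (h : patternWalk m n p k = patternWalk m n p l) :
    k ≡ l [MOD m.gcd n] := by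
  simp only [patternWalk, Prod.ext_iff, ZMod.natCast_eq_natCast_iff] at h
  have := (h.1.of_dvd (Nat.gcd_dvd_left m n)).add (h.2.of_dvd (Nat.gcd_dvd_right m n))
  rwa [count_add_count_not, count_add_count_not] at this

theorem lcm_dvd_of_patternWalk_add_mul_eq {d k e : ℕ} (hp : Periodic p d)
    (h₁ : Coprime m (count p d)) (h₂ : Coprime n (count (fun i => ¬ p i) d))
    (h : patternWalk m n p (k + d * e) = patternWalk m n p k) : m.lcm n ∣ e := by
  simp only [patternWalk_add_mul hp, Prod.ext_iff, add_eq_left, ZMod.natCast_eq_zero_iff] at h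
  exact Nat.lcm_dvd (h₁.dvd_of_dvd_mul_right h.1) (h₂.dvd_of_dvd_mul_right h.2)

theorem patternWalk_injOn (hp : Periodic p (m.gcd n))
    (h₁ : Coprime m (count p (m.gcd n))) (h₂ : Coprime n (count (fun i => ¬ p i) (m.gcd n))) :
    Set.InjOn (patternWalk m n p) (Set.Iio (m * n)) := by
  intro k hk l hl h
  wlog hkl : k ≤ l generalizing k l
  · exact (this hl hk h.symm (le_of_not_ge hkl)).symm
  obtain ⟨e, he⟩ := (Nat.modEq_iff_dvd' hkl).mp (modEq_gcd_of_patternWalk_eq h)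
  obtain rfl : l = k + m.gcd n * e := by omega
  have hlcm := lcm_dvd_of_patternWalk_add_mul_eq hp h₁ h₂ h.symm
  have hmn : m * n ∣ m.gcd n * e := Nat.gcd_mul_lcm m n ▸ Nat.mul_dvd_mul_left _ hlcm
  rw [Nat.eq_zero_of_dvd_of_lt hmn (by simp only [Set.mem_Iio] at hl; omega), add_zero]

variable (m n p) in
def patternCycle (t : ZMod (m * n)) : ZMod m × ZMod n :=
  patternWalk m n p t.val

theorem patternCycle_add_natCast [NeZero m] [NeZero n] (hp : Periodic p (m.gcd n))
    (t : ZMod (m * n)) (k : ℕ) :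
    patternCycle m n p (t + k) = patternWalk m n p (t.val + k) := by
  rw [patternCycle, ← ZMod.natCast_zmod_val t, ← Nat.cast_add, ZMod.val_natCast,
    (periodic_patternWalk hp).map_mod_nat, ZMod.natCast_zmod_val]

theorem arcInDim1_patternCycle_iff [NeZero m] [NeZero n] [Nontrivial (ZMod n)]
    (hp : Periodic p (m.gcd n)) (t : ZMod (m * n)) (k : ℕ) :
    ArcInDim1 (patternCycle m n p) (t + k) ↔ p (t.val + k) := by
  rw [ArcInDim1, patternCycle_add_natCast hp, add_assoc, ← Nat.cast_add_one,
    patternCycle_add_natCast hp, ← add_assoc]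
  by_cases h : p (t.val + k)
  · simp [patternWalk_succ_of_pos h, h]
  · simp [patternWalk_succ_of_neg h, h]

theorem arcInDim2_patternCycle_iff [NeZero m] [NeZero n] [Nontrivial (ZMod m)]
    (hp : Periodic p (m.gcd n)) (t : ZMod (m * n)) (k : ℕ) :
    ArcInDim2 (patternCycle m n p) (t + k) ↔ ¬ p (t.val + k) := by
  rw [ArcInDim2, patternCycle_add_natCast hp, add_assoc, ← Nat.cast_add_one,
    patternCycle_add_natCast hp, ← add_assoc]
  by_cases h : p (t.val + k)
  · simp [patternWalk_succ_of_pos h, h]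
  · simp [patternWalk_succ_of_neg h, h]

theorem isDirHamCycle2_patternCycle [NeZero m] [NeZero n] (hp : Periodic p (m.gcd n))
    (h₁ : Coprime m (count p (m.gcd n))) (h₂ : Coprime n (count (fun i => ¬ p i) (m.gcd n))) :
    IsDirHamCycle2 (patternCycle m n p) := by
  have hinj : Injective (patternCycle m n p) := fun s t h =>
    ZMod.val_injective _ (patternWalk_injOn hp h₁ h₂ (ZMod.val_lt s) (ZMod.val_lt t) h)
  refine ⟨(Fintype.bijective_iff_injective_and_card _).mpr ⟨hinj, by simp [ZMod.card]⟩,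
    fun t => ?_⟩
  have hsucc := patternCycle_add_natCast hp t 1
  rw [Nat.cast_one] at hsucc
  exact hsucc ▸ dirProdStep_patternWalk t.val

theorem windowCounts_patternCycle [NeZero m] [NeZero n] [Nontrivial (ZMod m)]
    [Nontrivial (ZMod n)] (hp : Periodic p (m.gcd n)) :
    WindowCounts (patternCycle m n p) (m.gcd n)
      (count p (m.gcd n)) (count (fun i => ¬ p i) (m.gcd n)) := by
  intro t
  simp only [arcInDim1_patternCycle_iff hp, arcInDim2_patternCycle_iff hp,
    ← count_eq_card_filter_range]
  exact ⟨count_add_left_of_periodic hp t.val,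
    count_add_left_of_periodic (p := fun i => ¬ p i) (hp.comp Not) t.val⟩

end DirTorus

theorem exists_dirHamCycle_of_gcd_split_general
    (m n : ℕ) (hm : 2 ≤ m) (hn : 2 ≤ n)
    (s₁ s₂ : ℕ)
    (hg₁ : Nat.gcd m s₁ = 1) (hg₂ : Nat.gcd n s₂ = 1)
    (hsum : s₁ + s₂ = Nat.gcd m n) :
    ∃ H : ZMod (m * n) → ZMod m × ZMod n,
      IsDirHamCycle2 H ∧ WindowCounts H (Nat.gcd m n) s₁ s₂ := by
  have : NeZero m := ⟨by omega⟩
  have : NeZero n := ⟨by omega⟩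
  have : Fact (1 < m) := ⟨hm⟩
  have : Fact (1 < n) := ⟨hn⟩
  let p : ℕ → Prop := fun i => i % m.gcd n < s₁
  have hp : Periodic p (m.gcd n) := fun i => by simp only [p, Nat.add_mod_right]
  have hs₁ : Nat.count p (m.gcd n) = s₁ := Nat.count_mod_lt (by omega)
  have hs₂ : Nat.count (fun i => ¬ p i) (m.gcd n) = s₂ := by
    have := Nat.count_add_count_not p (m.gcd n)
    omega
  refine ⟨DirTorus.patternCycle m n p, DirTorus.isDirHamCycle2_patternCycle hp
    (by rw [hs₁]; exact hg₁) (by rw [hs₂]; exact hg₂), ?_⟩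
  simpa only [hs₁, hs₂] using DirTorus.windowCounts_patternCycle hp

/-- **Trotter–Erdős-type construction.**  Let `m, n ≥ 2` and let `s₁, s₂` be
positive integers with `gcd(m, s₁) = 1`, `gcd(n, s₂) = 1` and
`s₁ + s₂ = gcd(m, n)`.  Then the Cartesian product of the directed cycles on
`m` and `n` vertices admits a directed Hamiltonian cycle `H` such that every
`gcd(m, n)` consecutive arcs of `H` contain exactly `s₁` arcs in the first
dimension and exactly `s₂` arcs in the second dimension. -/
theorem exists_dirHamCycle_of_gcd_split
    (m n : ℕ) (hm : 2 ≤ m) (hn : 2 ≤ n)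
    (s₁ s₂ : ℕ) (hs₁ : 0 < s₁) (hs₂ : 0 < s₂)
    (hg₁ : Nat.gcd m s₁ = 1) (hg₂ : Nat.gcd n s₂ = 1)
    (hsum : s₁ + s₂ = Nat.gcd m n) :
    ∃ H : ZMod (m * n) → ZMod m × ZMod n,
      IsDirHamCycle2 H ∧ WindowCounts H (Nat.gcd m n) s₁ s₂ :=
  exists_dirHamCycle_of_gcd_split_general m n hm hn s₁ s₂ hg₁ hg₂ hsum
end

section
/- Let m, n ≥ 2 and let H be any directed Hamiltonian cycle of the Cartesian product of the directed cycles on m and n vertices. Then there exist positive integers s₁ and s₂ with s₁ + s₂ = gcd(m, n), gcd(m, s₁) = 1, and gcd(n, s₂) = 1, such that every gcd(m, n) consecutive arcs of H contain exactly s₁ arcs in the first dimension and exactly s₂ arcs in the second dimension. -/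
/-!
Write `d = gcd m n`. If the arc leaving `(x, y)` is in the first dimension, so is the arc
leaving `(x + 1, y - 1)`, since otherwise both would enter `(x + 1, y)`. By the Chinese
remainder theorem the antidiagonal steps `(k, -k)` reach every vertex with the same `x + y`
modulo `d`, and every arc raises `x + y` by one; so the dimension of the arc at position `t`
depends only on `t` modulo `d`, and all windows of `d` arcs contain the same numbers `s₁, s₂`
of arcs of each dimension. After `j` windows the cycle has moved by `(j s₁, j s₂)`, which
returns it to its start only if `lcm m n ∣ j`; a prime `p` dividing `m` and `s₁` would
violate this for `j = lcm m n / p`.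
-/

open Finset

theorem Nat.coprime_of_forall_lcm_dvd {m n s₁ s₂ : ℕ} (hm : m ≠ 0) (hn : n ≠ 0)
    (hs : s₁ + s₂ = Nat.gcd m n)
    (h : ∀ j, m ∣ j * s₁ → n ∣ j * s₂ → Nat.lcm m n ∣ j) : Nat.Coprime m s₁ := by
  by_contra hne
  obtain ⟨p, hp, hpg⟩ := Nat.exists_prime_and_dvd hne
  have hpm : p ∣ m := hpg.trans (Nat.gcd_dvd_left m s₁)
  have hps₁ : p ∣ s₁ := hpg.trans (Nat.gcd_dvd_right m s₁)
  set L := Nat.lcm m n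
  have hL : 0 < L := Nat.lcm_pos (Nat.pos_of_ne_zero hm) (Nat.pos_of_ne_zero hn)
  have hpL : p ∣ L := hpm.trans (Nat.dvd_lcm_left m n)
  have hdiv : ∀ a s, a ∣ L → p ∣ s → a ∣ L / p * s := by
    rintro a _ haL ⟨u, rfl⟩
    rw [← mul_assoc, Nat.div_mul_cancel hpL]
    exact haL.mul_right u
  have hdvd : L ∣ L / p := by
    refine h (L / p) (hdiv m s₁ (Nat.dvd_lcm_left m n) hps₁) ?_
    by_cases hpn : p ∣ n
    · have hps₂ : p ∣ s₂ := (Nat.dvd_add_right hps₁).1 (hs ▸ Nat.dvd_gcd hpm hpn)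
      exact hdiv n s₂ (Nat.dvd_lcm_right m n) hps₂
    · have hnp : Nat.Coprime n p := ((Nat.Prime.coprime_iff_not_dvd hp).2 hpn).symm
      have hnL : n ∣ L / p * p := by rw [Nat.div_mul_cancel hpL]; exact Nat.dvd_lcm_right m n
      exact (hnp.dvd_of_dvd_mul_right hnL).mul_right s₂
  exact absurd (Nat.le_of_dvd (Nat.div_pos (Nat.le_of_dvd hL hpL) hp.pos) hdvd)
    (not_le.2 (Nat.div_lt_self hL hp.one_lt))

theorem ZMod.exists_natCast_eq_and_natCast_eq {m n : ℕ} [NeZero m] [NeZero n]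
    (a : ZMod m) (b : ZMod n) (h : (a.cast : ZMod (Nat.gcd m n)) = b.cast) :
    ∃ k : ℕ, (k : ZMod m) = a ∧ (k : ZMod n) = b := by
  rw [ZMod.cast_eq_val, ZMod.cast_eq_val, ZMod.natCast_eq_natCast_iff] at h
  obtain ⟨k, hk₁, hk₂⟩ := Nat.chineseRemainder' h
  refine ⟨k, ?_, ?_⟩
  · rw [(ZMod.natCast_eq_natCast_iff _ _ _).2 hk₁, ZMod.natCast_zmod_val]
  · rw [(ZMod.natCast_eq_natCast_iff _ _ _).2 hk₂, ZMod.natCast_zmod_val]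

theorem iff_add_of_forall_imp_add {G : Type*} [AddGroup G] [Finite G] {P : G → Prop} {a : G}
    (h : ∀ x, P x → P (x + a)) (x : G) : P (x + a) ↔ P x := by
  refine ⟨fun hx => ?_, h x⟩
  have hiter : ∀ k : ℕ, P (x + a + k • a) := by
    intro k
    induction k with
    | zero => simpa using hx
    | succ k ih => simpa [succ_nsmul, ← add_assoc] using h _ ih
  obtain ⟨k, hk⟩ := Nat.exists_eq_add_of_lt (addOrderOf_pos a)
  have := hiter k
  rwa [add_assoc, ← succ_nsmul', show k + 1 = addOrderOf a by omega, addOrderOf_nsmul_eq_zero,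
    add_zero] at this

theorem apply_add_nsmul {G G' : Type*} [AddMonoid G] [AddMonoid G'] {f : G → G'} {a : G} {c : G'}
    (h : ∀ x, f (x + a) = f x + c) (x : G) (j : ℕ) : f (x + j • a) = f x + j • c := by
  induction j with
  | zero => simp
  | succ j ih => rw [succ_nsmul, succ_nsmul, ← add_assoc, h, ih, add_assoc]

section WindowCount

variable {N : ℕ} (P : ZMod N → Prop) [DecidablePred P]

def windowCount (t : ZMod N) (w : ℕ) : ℕ :=
  #{a ∈ range w | P (t + (a : ℕ))}

theorem windowCount_succ (t : ZMod N) (w : ℕ) :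
    windowCount P t (w + 1) = windowCount P t w + if P (t + w) then 1 else 0 := by
  simp only [windowCount, card_filter, sum_range_succ]

theorem windowCount_succ' (t : ZMod N) (w : ℕ) :
    windowCount P t (w + 1) = windowCount P (t + 1) w + if P t then 1 else 0 := by
  simp only [windowCount, card_filter, sum_range_succ', Nat.cast_succ, Nat.cast_zero, add_zero,
    add_assoc, add_comm (1 : ZMod N)]

variable {P}

theorem windowCount_add_one {t : ZMod N} {w : ℕ} (hP : P (t + w) ↔ P t) :
    windowCount P (t + 1) w = windowCount P t w := by
  have := (windowCount_succ' P t w).symm.trans (windowCount_succ P t w)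
  rw [if_congr hP rfl rfl] at this
  omega

theorem windowCount_eq_of_periodic [NeZero N] {w : ℕ} (hP : ∀ t, P (t + w) ↔ P t) (t : ZMod N) :
    windowCount P t w = windowCount P 0 w := by
  rw [← ZMod.natCast_zmod_val t]
  induction t.val with
  | zero => rw [Nat.cast_zero]
  | succ k ih => rw [Nat.cast_succ, windowCount_add_one (hP _), ih]

end WindowCount

section Walk

variable {m n : ℕ} {H : ZMod (m * n) → ZMod m × ZMod n}

theorem not_arcInDim2_of_arcInDim1 [Fact (1 < n)] {s : ZMod (m * n)} (h : ArcInDim1 H s) :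
    ¬ ArcInDim2 H s :=
  fun h₂ => one_ne_zero (left_eq_add.mp (h.2.symm.trans h₂.2))

variable (hstep : ∀ t, DirProdStep (H t) (H (t + 1)))
include hstep

theorem arcInDim2_iff_not_arcInDim1 [Fact (1 < n)] (s : ZMod (m * n)) :
    ArcInDim2 H s ↔ ¬ ArcInDim1 H s :=
  ⟨fun h₂ h₁ => not_arcInDim2_of_arcInDim1 h₁ h₂, (hstep s).resolve_left⟩

theorem windowCount_arcInDim1_add_windowCount_arcInDim2 [Fact (1 < n)] (t : ZMod (m * n))
    (w : ℕ) : windowCount (ArcInDim1 H) t w + windowCount (ArcInDim2 H) t w = w := by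
  simp only [windowCount, arcInDim2_iff_not_arcInDim1 hstep]
  rw [card_filter_add_card_filter_not, card_range]

theorem fst_apply_add_one (s : ZMod (m * n)) :
    (H (s + 1)).1 = (H s).1 + if ArcInDim1 H s then 1 else 0 := by
  split_ifs with h
  · exact h.1
  · rw [((hstep s).resolve_left h).1, add_zero]

theorem snd_apply_add_one (s : ZMod (m * n)) :
    (H (s + 1)).2 = (H s).2 + if ArcInDim2 H s then 1 else 0 := by
  split_ifs with h
  · exact h.2
  · rw [((hstep s).resolve_right h).2, add_zero]

theorem apply_add_natCast (t : ZMod (m * n)) (w : ℕ) :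
    H (t + w) = H t +
      ((windowCount (ArcInDim1 H) t w : ZMod m), (windowCount (ArcInDim2 H) t w : ZMod n)) := by
  induction w with
  | zero => simp [windowCount]
  | succ w ih =>
    rw [Nat.cast_succ, ← add_assoc, windowCount_succ, windowCount_succ]
    ext <;> simp only [Prod.fst_add, Prod.snd_add, fst_apply_add_one hstep,
      snd_apply_add_one hstep, ih] <;> push_cast <;> ring

end Walk

theorem windowCounts_iff {m n : ℕ} {H : ZMod (m * n) → ZMod m × ZMod n} {w s₁ s₂ : ℕ} :
    WindowCounts H w s₁ s₂ ↔
      ∀ t, windowCount (ArcInDim1 H) t w = s₁ ∧ windowCount (ArcInDim2 H) t w = s₂ :=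
  Iff.rfl

section HamiltonianCycle

variable {m n : ℕ} {H : ZMod (m * n) → ZMod m × ZMod n} (hH : IsDirHamCycle2 H)
include hH

theorem arcInDim1_of_eq_add_one_neg_one [Fact (1 < m)] {t t' : ZMod (m * n)}
    (ht : ArcInDim1 H t) (ht' : H t' = H t + (1, -1)) : ArcInDim1 H t' := by
  refine (hH.2 t').resolve_right fun h => ?_
  have hnext : H (t' + 1) = H (t + 1) := by
    ext
    · rw [h.1, ht', ht.1]; rfl
    · rw [h.2, ht', ht.2]; simp
  obtain rfl : t' = t := add_right_cancel (hH.1.1 hnext)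
  exact one_ne_zero (left_eq_add.mp (congrArg Prod.fst ht'))

theorem arcInDim1_of_eq_add_natCast [Fact (1 < m)] {t : ZMod (m * n)} (ht : ArcInDim1 H t)
    (k : ℕ) {t' : ZMod (m * n)} (ht' : H t' = H t + ((k : ZMod m), -(k : ZMod n))) :
    ArcInDim1 H t' := by
  induction k generalizing t' with
  | zero =>
    rwa [hH.1.1 (ht'.trans (by simp) : H t' = H t)]
  | succ k ih =>
    obtain ⟨t'', ht''⟩ := hH.1.2 (H t + ((k : ZMod m), -(k : ZMod n)))
    refine arcInDim1_of_eq_add_one_neg_one hH (ih ht'') ?_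
    rw [ht', ht'']
    ext <;> simp <;> ring

theorem arcInDim1_add_gcd [Fact (1 < m)] [Fact (1 < n)] {t : ZMod (m * n)} (ht : ArcInDim1 H t) :
    ArcInDim1 H (t + Nat.gcd m n) := by
  set c₁ := windowCount (ArcInDim1 H) t (Nat.gcd m n)
  set c₂ := windowCount (ArcInDim2 H) t (Nat.gcd m n)
  have hsum : c₁ + c₂ = Nat.gcd m n := windowCount_arcInDim1_add_windowCount_arcInDim2 hH.2 t _
  have hcast : ((c₁ : ZMod m).cast : ZMod (Nat.gcd m n)) = (-(c₂ : ZMod n)).cast := by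
    rw [ZMod.cast_natCast (Nat.gcd_dvd_left m n), ZMod.cast_neg (Nat.gcd_dvd_right m n),
      ZMod.cast_natCast (Nat.gcd_dvd_right m n), eq_neg_iff_add_eq_zero, ← Nat.cast_add, hsum,
      ZMod.natCast_self]
  -- the window moves `H t` by `(c₁, c₂)`, an antidiagonal step as `c₁ + c₂ = gcd m n`
  obtain ⟨k, hk₁, hk₂⟩ := ZMod.exists_natCast_eq_and_natCast_eq _ _ hcast
  refine arcInDim1_of_eq_add_natCast hH ht k ?_
  rw [apply_add_natCast hH.2, hk₁, hk₂, neg_neg]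

theorem lcm_dvd_of_windowCounts [NeZero m] {s₁ s₂ : ℕ}
    (hw : WindowCounts H (Nat.gcd m n) s₁ s₂) {j : ℕ} (h₁ : m ∣ j * s₁) (h₂ : n ∣ j * s₂) :
    Nat.lcm m n ∣ j := by
  have hshift : ∀ t, H (t + (Nat.gcd m n : ℕ)) = H t + ((s₁ : ZMod m), (s₂ : ZMod n)) := by
    intro t
    obtain ⟨hw₁, hw₂⟩ := windowCounts_iff.1 hw t
    rw [apply_add_natCast hH.2, hw₁, hw₂]
  have hret : H (0 + j • ((Nat.gcd m n : ℕ) : ZMod (m * n))) = H 0 := by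
    rw [apply_add_nsmul hshift, Prod.smul_mk, nsmul_eq_mul, nsmul_eq_mul, ← Nat.cast_mul,
      ← Nat.cast_mul, (ZMod.natCast_eq_zero_iff _ _).2 h₁, (ZMod.natCast_eq_zero_iff _ _).2 h₂]
    exact add_zero _
  have hmn : m * n ∣ j * Nat.gcd m n := by
    rw [← ZMod.natCast_eq_zero_iff, Nat.cast_mul, ← nsmul_eq_mul]
    simpa using hH.1.1 hret
  rw [← Nat.gcd_mul_lcm, mul_comm j] at hmn
  exact (Nat.mul_dvd_mul_iff_left (Nat.gcd_pos_of_pos_left n (NeZero.pos m))).1 hmn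

end HamiltonianCycle

/-- **Trotter–Erdős-type necessity.**  Let `m, n ≥ 2` and let `H` be any
directed Hamiltonian cycle of the Cartesian product of the directed cycles on
`m` and `n` vertices.  Then there are positive integers `s₁, s₂` with
`s₁ + s₂ = gcd(m, n)`, `gcd(m, s₁) = 1` and `gcd(n, s₂) = 1` such that every
`gcd(m, n)` consecutive arcs of `H` contain exactly `s₁` arcs in the first
dimension and exactly `s₂` arcs in the second dimension. -/
theorem dirHamCycle_gcd_split
    (m n : ℕ) (hm : 2 ≤ m) (hn : 2 ≤ n)
    (H : ZMod (m * n) → ZMod m × ZMod n)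
    (hH : IsDirHamCycle2 H) :
    ∃ s₁ s₂ : ℕ, 0 < s₁ ∧ 0 < s₂ ∧ s₁ + s₂ = Nat.gcd m n ∧
      Nat.gcd m s₁ = 1 ∧ Nat.gcd n s₂ = 1 ∧
      WindowCounts H (Nat.gcd m n) s₁ s₂ := by
  have : Fact (1 < m) := ⟨hm⟩
  have : Fact (1 < n) := ⟨hn⟩
  have hper₁ : ∀ t, ArcInDim1 H (t + Nat.gcd m n) ↔ ArcInDim1 H t :=
    iff_add_of_forall_imp_add fun _ => arcInDim1_add_gcd hH
  have hper₂ : ∀ t, ArcInDim2 H (t + Nat.gcd m n) ↔ ArcInDim2 H t := fun t => by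
    simp only [arcInDim2_iff_not_arcInDim1 hH.2, hper₁]
  set s₁ := windowCount (ArcInDim1 H) 0 (Nat.gcd m n)
  set s₂ := windowCount (ArcInDim2 H) 0 (Nat.gcd m n)
  have hw : WindowCounts H (Nat.gcd m n) s₁ s₂ := windowCounts_iff.2 fun t =>
    ⟨windowCount_eq_of_periodic hper₁ t, windowCount_eq_of_periodic hper₂ t⟩
  have hsum : s₁ + s₂ = Nat.gcd m n := windowCount_arcInDim1_add_windowCount_arcInDim2 hH.2 0 _
  have hcop₁ : Nat.gcd m s₁ = 1 := Nat.coprime_of_forall_lcm_dvd (by omega) (by omega) hsum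
    fun _ => lcm_dvd_of_windowCounts hH hw
  have hcop₂ : Nat.gcd n s₂ = 1 := by
    refine Nat.coprime_of_forall_lcm_dvd (by omega) (by omega) (by rw [Nat.gcd_comm]; omega)
      fun _ h₂ h₁ => Nat.lcm_comm m n ▸ lcm_dvd_of_windowCounts hH hw h₁ h₂
  refine ⟨s₁, s₂, Nat.pos_of_ne_zero ?_, Nat.pos_of_ne_zero ?_, hsum, hcop₁, hcop₂, hw⟩
  · intro h; rw [h, Nat.gcd_zero_right] at hcop₁; omega
  · intro h; rw [h, Nat.gcd_zero_right] at hcop₂; omega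
end
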